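/- arXiv:2007.02448 — 8 statements merged into one kernel-verified Lean document; each statement's English description precedes it below -/
import Mathlib

section
/- If x is (φ,ε,δ)-feasible, then β(φ,x,ε,δ) = min{ r^p : r ≥ 0 and r·S_δ(φ,1) ∩ B̄(x,ε) ≠ ∅ }, and this minimum is attained. -/
open scoped ENNReal RealInnerProductSpace Pointwise
open Metric Set

noncomputable section

variable {H : Type*} [NormedAddCommGroup H] [InnerProductSpace ℝ H]

/-- Feasible pairs `(𝔠, f)` of the linear inverse problem `LIP(φ, x, ε, δ)`:
`(c f)^(1/p) ≤ 𝔠` and `‖x - φ f‖ ≤ ε + δ 𝔠`. -/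
def lipFeas (K : ℕ) (p : ℝ) (c : (Fin K → ℝ) → ℝ)
    (φ : (Fin K → ℝ) →ₗ[ℝ] H) (x : H) (ε δ : ℝ) : Set (ℝ × (Fin K → ℝ)) :=
  {cf | c cf.2 ^ (1 / p) ≤ cf.1 ∧ ‖x - φ cf.2‖ ≤ ε + δ * cf.1}

/-- The optimal value `β(φ,x,ε,δ) ∈ [0,∞]` of `LIP(φ,x,ε,δ)`, i.e. the infimum of `𝔠^p`
over feasible pairs `(𝔠,f)`; it equals `∞` if the problem is infeasible. -/
def lipVal (K : ℕ) (p : ℝ) (c : (Fin K → ℝ) → ℝ)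
    (φ : (Fin K → ℝ) →ₗ[ℝ] H) (x : H) (ε δ : ℝ) : ℝ≥0∞ :=
  sInf ((fun cf : ℝ × (Fin K → ℝ) => ENNReal.ofReal (cf.1 ^ p)) '' lipFeas K p c φ x ε δ)

/-- `E(φ,x,ε,δ)`: the set of `f`-components of optimal solutions of `LIP(φ,x,ε,δ)`. -/
def lipEnc (K : ℕ) (p : ℝ) (c : (Fin K → ℝ) → ℝ)
    (φ : (Fin K → ℝ) →ₗ[ℝ] H) (x : H) (ε δ : ℝ) : Set (Fin K → ℝ) :=
  {f | ∃ 𝔠 : ℝ, (𝔠, f) ∈ lipFeas K p c φ x ε δ ∧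
      ENNReal.ofReal (𝔠 ^ p) = lipVal K p c φ x ε δ}

/-- The set `S_δ(φ,1) = {z : ∃ f, c f ≤ 1 ∧ ‖z - φ f‖ ≤ δ}`. -/
def lipSet (K : ℕ) (c : (Fin K → ℝ) → ℝ)
    (φ : (Fin K → ℝ) →ₗ[ℝ] H) (δ : ℝ) : Set H :=
  {z | ∃ f, c f ≤ 1 ∧ ‖z - φ f‖ ≤ δ}

/-- The dual function `‖λ‖'_φ = sup {⟨λ,z⟩ : z ∈ S_δ(φ,1)}`. -/
def lipDual (K : ℕ) (c : (Fin K → ℝ) → ℝ)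
    (φ : (Fin K → ℝ) →ₗ[ℝ] H) (δ : ℝ) (l : H) : ℝ :=
  sSup ((fun z => ⟪l, z⟫) '' lipSet K c φ δ)

/-- The set `Λ_δ(φ,x,ε)` of optimal dual variables: `λ` with `‖λ‖'_φ = 1` and
`⟨λ,x⟩ - ε‖λ‖ = (β(φ,x,ε,δ))^(1/p)`. -/
def lipLambda (K : ℕ) (p : ℝ) (c : (Fin K → ℝ) → ℝ)
    (φ : (Fin K → ℝ) →ₗ[ℝ] H) (x : H) (ε δ : ℝ) : Set H :=
  {l | lipDual K c φ δ l = 1 ∧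
      ENNReal.ofReal (⟪l, x⟫ - ε * ‖l‖) = lipVal K p c φ x ε δ ^ (1 / p)}

/-- If `x` is `(φ,ε,δ)`-feasible, then
`β(φ,x,ε,δ) = min { r^p : r ≥ 0, r • S_δ(φ,1) ∩ B̄(x,ε) ≠ ∅ }`, the minimum being attained. -/
theorem lipVal_eq_min_scaling
    [FiniteDimensional ℝ H]
    (K : ℕ) (p : ℝ) (c : (Fin K → ℝ) → ℝ)
    (φ : (Fin K → ℝ) →ₗ[ℝ] H) (x : H) (ε δ : ℝ)
    (hp : 0 < p) (hc0 : ∀ f, 0 ≤ c f)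
    (hhom : ∀ (α : ℝ) (f : Fin K → ℝ), 0 ≤ α → c (α • f) = α ^ p * c f)
    (hconv : Convex ℝ {f | c f ≤ 1}) (hcpt : IsCompact {f | c f ≤ 1})
    (hε : 0 ≤ ε) (hδ : 0 ≤ δ)
    (hfeas : lipVal K p c φ x ε δ ≠ ⊤) :
    ∃ r : ℝ, 0 ≤ r ∧ ((r • lipSet K c φ δ) ∩ closedBall x ε).Nonempty ∧
      lipVal K p c φ x ε δ = ENNReal.ofReal (r ^ p) ∧
      ∀ r' : ℝ, 0 ≤ r' → ((r' • lipSet K c φ δ) ∩ closedBall x ε).Nonempty →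
        r ^ p ≤ r' ^ p := by
  classical
  set S := lipSet K c φ δ with hSdef
  have hc00 : c 0 = 0 := by
    have h := hhom 0 0 le_rfl
    simpa [Real.zero_rpow hp.ne'] using h
  have hS0 : (0 : H) ∈ S := ⟨0, by simp [hc00], by simp [hδ]⟩
  -- bridge between nonempty intersection and explicit witnesses
  have hbridge : ∀ r : ℝ, ((r • S) ∩ closedBall x ε).Nonempty ↔
      ∃ f b, c f ≤ 1 ∧ ‖b‖ ≤ δ ∧ r • (φ f + b) ∈ closedBall x ε := by
    intro r
    constructor
    · rintro ⟨z, hz, hzball⟩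
      rw [Set.mem_smul_set] at hz
      obtain ⟨s, hsS, rfl⟩ := hz
      obtain ⟨f, hcf, hfs⟩ := hsS
      exact ⟨f, s - φ f, hcf, hfs, by simpa using hzball⟩
    · rintro ⟨f, b, hcf, hb, hball⟩
      exact ⟨r • (φ f + b),
        Set.mem_smul_set.mpr ⟨φ f + b, ⟨f, hcf, by simpa using hb⟩, rfl⟩, hball⟩
  -- L1: feasible pair gives a good scaling
  have hL1 : ∀ 𝔠 f, (𝔠, f) ∈ lipFeas K p c φ x ε δ →
      0 ≤ 𝔠 ∧ ((𝔠 • S) ∩ closedBall x ε).Nonempty := by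
    rintro 𝔠 f ⟨h1, h2⟩
    have hcfnn : (0:ℝ) ≤ c f ^ (1/p) := Real.rpow_nonneg (hc0 f) _
    have h𝔠0 : 0 ≤ 𝔠 := hcfnn.trans h1
    refine ⟨h𝔠0, ?_⟩
    rcases eq_or_lt_of_le h𝔠0 with h0 | hpos
    · -- 𝔠 = 0 : then c f = 0, f = 0, so ‖x‖ ≤ ε
      have hcf0 : c f = 0 := by
        by_contra hne
        have hcfpos : 0 < c f := lt_of_le_of_ne (hc0 f) (Ne.symm hne)
        have hpow : 0 < c f ^ (1/p) := Real.rpow_pos_of_pos hcfpos _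
        have := h1.trans_eq h0.symm
        linarith
      have hf0 : f = 0 := by
        by_contra hne
        obtain ⟨M, hM⟩ := isBounded_iff_forall_norm_le.mp hcpt.isBounded
        have hfn : 0 < ‖f‖ := norm_pos_iff.mpr hne
        set α : ℝ := (|M| + 1) / ‖f‖ with hα'
        have hα : 0 ≤ α := by positivity
        have hmem : α • f ∈ {f | c f ≤ 1} := by
          simp [hhom α f hα, hcf0]
        have hle := hM _ hmem
        have hval : ‖α • f‖ = |M| + 1 := by
          rw [norm_smul, Real.norm_eq_abs, abs_of_nonneg hα, hα']
          field_simp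
        rw [hval] at hle
        have : M ≤ |M| := le_abs_self M
        linarith
      have hx : ‖x‖ ≤ ε := by
        have := h2
        rw [hf0] at this
        simpa [← h0] using this
      refine ⟨0, Set.mem_smul_set.mpr ⟨0, hS0, smul_zero _⟩, ?_⟩
      simpa [mem_closedBall, dist_zero_left] using hx
    · -- 𝔠 > 0
      have hcfle : c f ≤ 𝔠 ^ p := by
        have key : (c f ^ (1/p)) ^ p = c f := by
          rw [← Real.rpow_mul (hc0 f), one_div_mul_cancel hp.ne', Real.rpow_one]
        have := Real.rpow_le_rpow hcfnn h1 hp.le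
        rwa [key] at this
      have hcf' : c (𝔠⁻¹ • f) ≤ 1 := by
        rw [hhom 𝔠⁻¹ f (by positivity)]
        calc 𝔠⁻¹ ^ p * c f ≤ 𝔠⁻¹ ^ p * 𝔠 ^ p :=
              mul_le_mul_of_nonneg_left hcfle (Real.rpow_nonneg (by positivity) _)
          _ = 1 := by
              rw [← Real.mul_rpow (by positivity) hpos.le, inv_mul_cancel₀ hpos.ne',
                Real.one_rpow]
      have hφf' : 𝔠 • φ (𝔠⁻¹ • f) = φ f := by
        rw [← map_smul, smul_inv_smul₀ hpos.ne']
      by_cases hxe : ‖x - φ f‖ ≤ ε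
      · refine ⟨φ f, Set.mem_smul_set.mpr ⟨φ (𝔠⁻¹ • f), ⟨𝔠⁻¹ • f, hcf', by simp [hδ]⟩, hφf'⟩, ?_⟩
        simpa [mem_closedBall, dist_eq_norm, norm_sub_rev] using hxe
      · push_neg at hxe
        set n := ‖x - φ f‖ with hn'
        have hn : 0 < n := lt_of_le_of_lt hε hxe
        set t := ε / n with ht'
        set z := x + t • (φ f - x) with hz'
        have ht0 : 0 ≤ t := by positivity
        have ht1 : t ≤ 1 := by rw [ht', div_le_one hn]; exact hxe.le
        have hzx : ‖z - x‖ = ε := by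
          have : z - x = t • (φ f - x) := by rw [hz']; abel
          rw [this, norm_smul, Real.norm_eq_abs, abs_of_nonneg ht0, norm_sub_rev, ← hn', ht']
          field_simp
        have hzsub : z - φ f = (1 - t) • (x - φ f) := by
          rw [hz']; module
        have hzf : ‖z - φ f‖ = n - ε := by
          rw [hzsub, norm_smul, Real.norm_eq_abs, abs_of_nonneg (by linarith), ← hn']
          rw [ht']
          field_simp
        have hzfδ : ‖z - φ f‖ ≤ δ * 𝔠 := by
          rw [hzf]; linarith [h2]
        refine ⟨z, Set.mem_smul_set.mpr ⟨𝔠⁻¹ • z, ⟨𝔠⁻¹ • f, hcf', ?_⟩,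
          smul_inv_smul₀ hpos.ne' z⟩, ?_⟩
        · have heq : 𝔠⁻¹ • z - φ (𝔠⁻¹ • f) = 𝔠⁻¹ • (z - φ f) := by
            rw [map_smul, smul_sub]
          rw [heq, norm_smul, Real.norm_eq_abs, abs_of_nonneg (by positivity)]
          calc 𝔠⁻¹ * ‖z - φ f‖ ≤ 𝔠⁻¹ * (δ * 𝔠) :=
                mul_le_mul_of_nonneg_left hzfδ (by positivity)
            _ = δ := by field_simp
        · rw [mem_closedBall, dist_eq_norm, hzx]
  -- L2: good scaling gives upper bound on lipVal
  have hL2 : ∀ r : ℝ, 0 ≤ r → ((r • S) ∩ closedBall x ε).Nonempty →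
      lipVal K p c φ x ε δ ≤ ENNReal.ofReal (r ^ p) := by
    intro r hr hne
    obtain ⟨f, b, hcf, hb, hball⟩ := (hbridge r).mp hne
    have hmem : (r, r • f) ∈ lipFeas K p c φ x ε δ := by
      constructor
      · have h1 : c (r • f) ≤ r ^ p := by
          rw [hhom r f hr]
          calc r ^ p * c f ≤ r ^ p * 1 :=
                mul_le_mul_of_nonneg_left hcf (Real.rpow_nonneg hr _)
            _ = r ^ p := mul_one _
        calc c (r • f) ^ (1/p) ≤ (r ^ p) ^ (1/p) :=
              Real.rpow_le_rpow (hc0 _) h1 (by positivity)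
          _ = r := by rw [← Real.rpow_mul hr, mul_one_div_cancel hp.ne', Real.rpow_one]
      · have htri : ‖x - φ (r • f)‖ ≤ ‖x - r • (φ f + b)‖ + ‖r • (φ f + b) - φ (r • f)‖ := by
          have := dist_triangle x (r • (φ f + b)) (φ (r • f))
          simpa [dist_eq_norm] using this
        have h1 : ‖x - r • (φ f + b)‖ ≤ ε := by
          have := hball
          rw [mem_closedBall, dist_comm, dist_eq_norm] at this
          exact this
        have h2 : ‖r • (φ f + b) - φ (r • f)‖ ≤ δ * r := by
          have heq : r • (φ f + b) - φ (r • f) = r • b := by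
            rw [map_smul, smul_add]; abel
          rw [heq, norm_smul, Real.norm_eq_abs, abs_of_nonneg hr, mul_comm]
          exact mul_le_mul_of_nonneg_right hb hr
        calc ‖x - φ (r • f)‖ ≤ ‖x - r • (φ f + b)‖ + ‖r • (φ f + b) - φ (r • f)‖ := htri
          _ ≤ ε + δ * r := add_le_add h1 h2
    exact sInf_le ⟨(r, r • f), hmem, rfl⟩
  -- feasibility gives a feasible point
  have hne : (lipFeas K p c φ x ε δ).Nonempty := by
    by_contra h
    rw [not_nonempty_iff_eq_empty] at h
    exact hfeas (by rw [lipVal, h, image_empty, sInf_empty])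
  obtain ⟨⟨𝔠₀, f₀⟩, h0⟩ := hne
  obtain ⟨h𝔠₀, hA₀⟩ := hL1 𝔠₀ f₀ h0
  -- compact search domain
  have hφc : Continuous φ := φ.continuous_of_finiteDimensional
  set D : Set (ℝ × (Fin K → ℝ) × H) :=
    {q | q.1 ∈ Icc (0:ℝ) 𝔠₀ ∧ c q.2.1 ≤ 1 ∧ q.2.2 ∈ closedBall (0:H) δ ∧
      q.1 • (φ q.2.1 + q.2.2) ∈ closedBall x ε} with hDdef
  have hcont : Continuous (fun q : ℝ × (Fin K → ℝ) × H => q.1 • (φ q.2.1 + q.2.2)) := by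
    apply Continuous.smul continuous_fst
    exact ((hφc.comp (continuous_fst.comp continuous_snd)).add
      (continuous_snd.comp continuous_snd))
  have hDeq : D = (Icc (0:ℝ) 𝔠₀ ×ˢ ({f | c f ≤ 1} ×ˢ closedBall (0:H) δ)) ∩
      ((fun q : ℝ × (Fin K → ℝ) × H => q.1 • (φ q.2.1 + q.2.2)) ⁻¹' closedBall x ε) := by
    ext ⟨r, f, b⟩
    simp only [hDdef, Set.mem_setOf_eq, Set.mem_inter_iff, Set.mem_prod, Set.mem_preimage]
    tauto
  have hDclosed : IsClosed D := by
    rw [hDeq]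
    exact ((isClosed_Icc.prod (hcpt.isClosed.prod Metric.isClosed_closedBall))).inter
      (Metric.isClosed_closedBall.preimage hcont)
  have hDsub : D ⊆ (Icc (0:ℝ) 𝔠₀) ×ˢ ({f | c f ≤ 1} ×ˢ closedBall (0:H) δ) := by
    rintro ⟨r, f, b⟩ ⟨h1, h2, h3, _⟩
    exact ⟨h1, h2, h3⟩
  have hDcpt : IsCompact D :=
    ((isCompact_Icc.prod (hcpt.prod (isCompact_closedBall _ _)))).of_isClosed_subset
      hDclosed hDsub
  obtain ⟨f₁, b₁, hc1, hb1, hball1⟩ := (hbridge 𝔠₀).mp hA₀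
  have hDne : D.Nonempty :=
    ⟨(𝔠₀, f₁, b₁), ⟨h𝔠₀, le_rfl⟩, hc1, mem_closedBall_zero_iff.mpr hb1, hball1⟩
  obtain ⟨⟨r, fs, bs⟩, hqD, hqmin⟩ :=
    hDcpt.exists_isMinOn hDne (continuous_fst.continuousOn)
  have hmin' : ∀ q ∈ D, r ≤ q.1 := fun q hq => hqmin hq
  have hr0 : 0 ≤ r := hqD.1.1
  have hA : ((r • S) ∩ closedBall x ε).Nonempty :=
    (hbridge r).mpr ⟨fs, bs, hqD.2.1, mem_closedBall_zero_iff.mp hqD.2.2.1, hqD.2.2.2⟩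
  have hminA : ∀ r', 0 ≤ r' → ((r' • S) ∩ closedBall x ε).Nonempty → r ≤ r' := by
    intro r' hr' hne'
    by_cases hle : r' ≤ 𝔠₀
    · obtain ⟨f₂, b₂, h2, h3, h4⟩ := (hbridge r').mp hne'
      exact hmin' (r', f₂, b₂) ⟨⟨hr', hle⟩, h2, mem_closedBall_zero_iff.mpr h3, h4⟩
    · push_neg at hle
      have hr𝔠 : r ≤ 𝔠₀ := hqD.1.2
      linarith
  refine ⟨r, hr0, hA, ?_, ?_⟩
  · apply le_antisymm (hL2 r hr0 hA)
    apply le_sInf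
    rintro v ⟨⟨𝔠, f⟩, hmem, rfl⟩
    obtain ⟨h𝔠, hA'⟩ := hL1 𝔠 f hmem
    exact ENNReal.ofReal_le_ofReal (Real.rpow_le_rpow hr0 (hminA 𝔠 h𝔠 hA') hp.le)
  · intro r' hr' hne'
    exact Real.rpow_le_rpow hr0 (hminA r' hr' hne') hp.le
end
end

section
/- Let x be (φ,ε,δ)-feasible, write 𝔠_x := (β(φ,x,ε,δ))^{1/p}, let f_x ∈ E(φ,x,ε,δ), and set S_δ(φ,x,ε) := 𝔠_x · S_δ(φ,1). Then the intersection B̄(x,ε) ∩ S_δ(φ,x,ε) is a singleton {y*}, where y* = x if ε = 0, and y* = (ε·φ(f_x) + δ𝔠_x·x)/(ε + δ𝔠_x) if ε > 0. -/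
open scoped ENNReal RealInnerProductSpace Pointwise
open Metric Set

/-!
If `𝔠ₓ = 0` then `𝔠ₓ • S_δ(φ,1) = {0}`. Otherwise, by optimality of `𝔠ₓ`, no point of the open
ball `B(x, ε)` lies in `𝔠ₓ • S_δ(φ,1)`: such a point `y` could be shrunk to `λ y` with `λ < 1`,
still inside `B̄(x, ε)`, giving a feasible pair of the linear inverse problem with the smaller
value `(λ 𝔠ₓ)^p`. So the intersection of the convex set `𝔠ₓ • S_δ(φ,1)` with `B̄(x, ε)` lies on
the sphere, and strict convexity of the Hilbert norm leaves room for at most one point. The point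
`y*` on the segment from `x` to `φ fₓ` that splits the residual `‖x - φ fₓ‖ ≤ ε + δ 𝔠ₓ` in the
ratio `ε : δ 𝔠ₓ` is in the intersection.
-/

noncomputable section

variable {H : Type*} [NormedAddCommGroup H] [InnerProductSpace ℝ H]

theorem subsingleton_closedBall_inter_of_disjoint_ball {E : Type*} [NormedAddCommGroup E]
    [NormedSpace ℝ E] [StrictConvexSpace ℝ E] {z : E} {r : ℝ} {t : Set E} (ht : Convex ℝ t)
    (h : Disjoint (ball z r) t) : (closedBall z r ∩ t).Subsingleton := by
  rintro a ⟨ha, hat⟩ b ⟨hb, hbt⟩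
  by_contra hne
  have hhalf : (0 : ℝ) < 1 / 2 := by norm_num
  exact h.notMem_of_mem_left (combo_mem_ball_of_ne ha hb hne hhalf hhalf (by norm_num))
    (ht hat hbt hhalf.le hhalf.le (by norm_num))

theorem norm_inv_add_smul_add_smul_sub_le {E : Type*} [NormedAddCommGroup E] [NormedSpace ℝ E]
    {a b : ℝ} {u v : E} (ha : 0 ≤ a) (hab : 0 < a + b) (huv : ‖u - v‖ ≤ a + b) :
    ‖(a + b)⁻¹ • (a • v + b • u) - u‖ ≤ a := by
  have hdiff : (a + b)⁻¹ • (a • v + b • u) - u = ((a + b)⁻¹ * a) • (v - u) := by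
    match_scalars <;> field_simp
    ring
  rw [hdiff, norm_smul, Real.norm_of_nonneg (by positivity), norm_sub_rev, mul_comm _ a, mul_assoc]
  calc a * ((a + b)⁻¹ * ‖u - v‖) ≤ a * ((a + b)⁻¹ * (a + b)) := by gcongr
    _ = a := by rw [inv_mul_cancel₀ hab.ne', mul_one]

open Filter Topology

section LinearInverseProblem

variable {K : ℕ} {p : ℝ} {c : (Fin K → ℝ) → ℝ} {φ : (Fin K → ℝ) →ₗ[ℝ] H} {x y : H} {ε δ t : ℝ}
  {f g : Fin K → ℝ}

theorem mem_lipFeas_iff (hp : 0 < p) (hc0 : ∀ f, 0 ≤ c f) (ht : 0 ≤ t) :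
    (t, g) ∈ lipFeas K p c φ x ε δ ↔ c g ≤ t ^ p ∧ ‖x - φ g‖ ≤ ε + δ * t := by
  rw [lipFeas, mem_ofPred_eq, one_div, Real.rpow_inv_le_iff_of_pos (hc0 g) ht hp]

theorem eq_zero_of_cost_eq_zero (hhom : ∀ (α : ℝ) (f : Fin K → ℝ), 0 ≤ α → c (α • f) = α ^ p * c f)
    (hcpt : IsCompact {f | c f ≤ 1}) (hf : c f = 0) : f = 0 := by
  have hray : ∀ α : ℝ, 0 ≤ α → α • f ∈ {f | c f ≤ 1} := fun α hα => by
    simp [hhom α f hα, hf]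
  obtain ⟨R, hR⟩ := isBounded_iff_forall_norm_le.mp hcpt.isBounded
  by_contra hne
  have hfpos : 0 < ‖f‖ := norm_pos_iff.mpr hne
  have hR0 : 0 ≤ R := (norm_nonneg _).trans (hR _ (one_smul ℝ f ▸ hray 1 zero_le_one))
  have hbig := hR _ (hray ((R + 1) / ‖f‖) (by positivity))
  rw [norm_smul, Real.norm_of_nonneg (by positivity), div_mul_cancel₀ _ hfpos.ne'] at hbig
  linarith

theorem convex_lipSet (hconv : Convex ℝ {f | c f ≤ 1}) : Convex ℝ (lipSet K c φ δ) := by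
  rintro z₁ ⟨f₁, hf₁, hz₁⟩ z₂ ⟨f₂, hf₂, hz₂⟩ a b ha hb hab
  refine ⟨a • f₁ + b • f₂, hconv hf₁ hf₂ ha hb hab, ?_⟩
  calc ‖a • z₁ + b • z₂ - φ (a • f₁ + b • f₂)‖ = ‖a • (z₁ - φ f₁) + b • (z₂ - φ f₂)‖ := by
        rw [map_add, map_smul, map_smul]; congr 1; module
    _ ≤ a * ‖z₁ - φ f₁‖ + b * ‖z₂ - φ f₂‖ := by
        grw [norm_add_le, norm_smul, norm_smul, Real.norm_of_nonneg ha, Real.norm_of_nonneg hb]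
    _ ≤ a * δ + b * δ := by gcongr
    _ = δ := by rw [← add_mul, hab, one_mul]

theorem exists_of_mem_smul_lipSet
    (hhom : ∀ (α : ℝ) (f : Fin K → ℝ), 0 ≤ α → c (α • f) = α ^ p * c f) (ht : 0 ≤ t)
    (hy : y ∈ t • lipSet K c φ δ) : ∃ g, c g ≤ t ^ p ∧ ‖y - φ g‖ ≤ δ * t := by
  obtain ⟨z, ⟨f, hf, hzf⟩, rfl⟩ := hy
  refine ⟨t • f, ?_, ?_⟩
  · rw [hhom t f ht]
    exact mul_le_of_le_one_right (Real.rpow_nonneg ht p) hf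
  · rw [map_smul, ← smul_sub, norm_smul, Real.norm_of_nonneg ht, mul_comm δ]
    gcongr

theorem mem_smul_lipSet (hp : 0 < p) (hc0 : ∀ f, 0 ≤ c f)
    (hhom : ∀ (α : ℝ) (f : Fin K → ℝ), 0 ≤ α → c (α • f) = α ^ p * c f)
    (hcpt : IsCompact {f | c f ≤ 1}) (hδ : 0 ≤ δ) (ht : 0 ≤ t) (hg : c g ≤ t ^ p)
    (hy : ‖y - φ g‖ ≤ δ * t) : y ∈ t • lipSet K c φ δ := by
  rcases ht.eq_or_lt with rfl | htpos
  · have hg0 : g = 0 := eq_zero_of_cost_eq_zero hhom hcpt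
      (le_antisymm (by rwa [Real.zero_rpow hp.ne'] at hg) (hc0 g))
    have hy0 : y = 0 := by simpa [hg0] using hy
    have hc00 : c 0 = 0 := by simpa [Real.zero_rpow hp.ne'] using hhom 0 0 le_rfl
    exact hy0 ▸ zero_mem_smul_set ⟨0, hc00.trans_le zero_le_one, by simpa using hδ⟩
  · refine ⟨t⁻¹ • y, ⟨t⁻¹ • g, ?_, ?_⟩, smul_inv_smul₀ htpos.ne' y⟩
    · rw [hhom _ _ (inv_nonneg.mpr ht), Real.inv_rpow ht]
      calc (t ^ p)⁻¹ * c g ≤ (t ^ p)⁻¹ * t ^ p := by gcongr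
        _ = 1 := inv_mul_cancel₀ (Real.rpow_pos_of_pos htpos p).ne'
    · rw [map_smul, ← smul_sub, norm_smul, Real.norm_of_nonneg (inv_nonneg.mpr ht)]
      calc t⁻¹ * ‖y - φ g‖ ≤ t⁻¹ * (δ * t) := by gcongr
        _ = δ := by field_simp

theorem lipVal_le_of_mem_closedBall_inter_smul_lipSet (hp : 0 < p) (hc0 : ∀ f, 0 ≤ c f)
    (hhom : ∀ (α : ℝ) (f : Fin K → ℝ), 0 ≤ α → c (α • f) = α ^ p * c f) (ht : 0 ≤ t)
    (hy : y ∈ closedBall x ε ∩ t • lipSet K c φ δ) :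
    lipVal K p c φ x ε δ ≤ ENNReal.ofReal (t ^ p) := by
  obtain ⟨hyx, hyS⟩ := hy
  obtain ⟨g, hg, hyg⟩ := exists_of_mem_smul_lipSet hhom ht hyS
  refine sInf_le ⟨(t, g), (mem_lipFeas_iff hp hc0 ht).mpr ⟨hg, ?_⟩, rfl⟩
  rw [mem_closedBall', dist_eq_norm] at hyx
  calc ‖x - φ g‖ ≤ ‖x - y‖ + ‖y - φ g‖ := norm_sub_le_norm_sub_add_norm_sub x y (φ g)
    _ ≤ ε + δ * t := add_le_add hyx hyg

theorem disjoint_ball_smul_lipSet (hp : 0 < p) (hc0 : ∀ f, 0 ≤ c f)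
    (hhom : ∀ (α : ℝ) (f : Fin K → ℝ), 0 ≤ α → c (α • f) = α ^ p * c f) (htpos : 0 < t)
    (hval : lipVal K p c φ x ε δ = ENNReal.ofReal (t ^ p)) :
    Disjoint (ball x ε) (t • lipSet K c φ δ) := by
  refine disjoint_left.mpr fun y hyx hyS => ?_
  have hlim : Tendsto (fun s : ℝ => s • y) (𝓝[<] 1) (𝓝 y) := by
    simpa using ((tendsto_id (x := 𝓝[<] (1 : ℝ))).mono_right nhdsWithin_le_nhds).smul_const y
  obtain ⟨s, hsx, hs0, hs1⟩ := ((hlim.eventually (isOpen_ball.mem_nhds hyx)).and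
    (Ioo_mem_nhdsLT zero_lt_one)).exists
  have hsS : s • y ∈ (s * t) • lipSet K c φ δ := by
    rw [mul_smul]; exact smul_mem_smul_set hyS
  have hle := lipVal_le_of_mem_closedBall_inter_smul_lipSet hp hc0 hhom (by positivity)
    ⟨ball_subset_closedBall hsx, hsS⟩
  have hlt : ENNReal.ofReal ((s * t) ^ p) < ENNReal.ofReal (t ^ p) :=
    (ENNReal.ofReal_lt_ofReal_iff (by positivity)).mpr
      (Real.rpow_lt_rpow (by positivity) (mul_lt_of_lt_one_left htpos hs1) hp)
  exact (hle.trans_lt hlt).ne hval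

end LinearInverseProblem

theorem intersection_singleton_general
    (K : ℕ) (p : ℝ) (c : (Fin K → ℝ) → ℝ)
    (φ : (Fin K → ℝ) →ₗ[ℝ] H) (x : H) (ε δ : ℝ)
    (hp : 0 < p) (hc0 : ∀ f, 0 ≤ c f)
    (hhom : ∀ (α : ℝ) (f : Fin K → ℝ), 0 ≤ α → c (α • f) = α ^ p * c f)
    (hconv : Convex ℝ {f | c f ≤ 1}) (hcpt : IsCompact {f | c f ≤ 1})
    (hδ : 0 ≤ δ)
    (cx : ℝ) (hcx : cx = (lipVal K p c φ x ε δ).toReal ^ (1 / p))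
    (fx : Fin K → ℝ) (hfx : fx ∈ lipEnc K p c φ x ε δ) :
    (ε = 0 → closedBall x ε ∩ cx • lipSet K c φ δ = {x}) ∧
    (0 < ε → closedBall x ε ∩ cx • lipSet K c φ δ =
      {(ε + δ * cx)⁻¹ • (ε • (φ fx) + (δ * cx) • x)}) := by
  obtain ⟨𝔠, h𝔠, hval⟩ := hfx
  have h𝔠0 : 0 ≤ 𝔠 := (Real.rpow_nonneg (hc0 fx) _).trans h𝔠.1
  obtain rfl : cx = 𝔠 := by
    rw [hcx, ← hval, ENNReal.toReal_ofReal (by positivity), ← Real.rpow_mul h𝔠0,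
      mul_one_div_cancel hp.ne', Real.rpow_one]
  obtain ⟨hcost, hres⟩ := (mem_lipFeas_iff hp hc0 h𝔠0).mp h𝔠
  refine ⟨fun hε => ?_, fun hε => ?_⟩
  · subst hε
    rw [closedBall_zero, singleton_inter_of_mem]
    exact mem_smul_lipSet hp hc0 hhom hcpt hδ h𝔠0 hcost (by rwa [zero_add] at hres)
  · have hsum : 0 < ε + δ * cx := by positivity
    refine Subsingleton.eq_singleton_of_mem ?_ ⟨?_, ?_⟩
    · rcases h𝔠0.eq_or_lt with rfl | hpos
      · exact (subsingleton_zero_smul_set _).anti inter_subset_right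
      · exact subsingleton_closedBall_inter_of_disjoint_ball ((convex_lipSet hconv).smul cx)
          (disjoint_ball_smul_lipSet hp hc0 hhom hpos hval.symm)
    · rw [mem_closedBall, dist_eq_norm]
      exact norm_inv_add_smul_add_smul_sub_le hε.le hsum hres
    · refine mem_smul_lipSet hp hc0 hhom hcpt hδ h𝔠0 hcost ?_
      rw [add_comm ε, add_comm (ε • φ fx)]
      exact norm_inv_add_smul_add_smul_sub_le (by positivity) (by linarith)
        (by rwa [norm_sub_rev, add_comm])

/-- For feasible `x`, with `𝔠ₓ := β^(1/p)` and any `fₓ ∈ E(φ,x,ε,δ)`,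
the intersection `B̄(x,ε) ∩ 𝔠ₓ • S_δ(φ,1)` is the singleton `{y*}` described below. -/
theorem intersection_singleton
    [FiniteDimensional ℝ H]
    (K : ℕ) (p : ℝ) (c : (Fin K → ℝ) → ℝ)
    (φ : (Fin K → ℝ) →ₗ[ℝ] H) (x : H) (ε δ : ℝ)
    (hp : 0 < p) (hc0 : ∀ f, 0 ≤ c f)
    (hhom : ∀ (α : ℝ) (f : Fin K → ℝ), 0 ≤ α → c (α • f) = α ^ p * c f)
    (hconv : Convex ℝ {f | c f ≤ 1}) (hcpt : IsCompact {f | c f ≤ 1})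
    (hε : 0 ≤ ε) (hδ : 0 ≤ δ)
    (hfeas : lipVal K p c φ x ε δ ≠ ⊤)
    (cx : ℝ) (hcx : cx = (lipVal K p c φ x ε δ).toReal ^ (1 / p))
    (fx : Fin K → ℝ) (hfx : fx ∈ lipEnc K p c φ x ε δ) :
    (ε = 0 → closedBall x ε ∩ cx • lipSet K c φ δ = {x}) ∧
    (0 < ε → closedBall x ε ∩ cx • lipSet K c φ δ =
      {(ε + δ * cx)⁻¹ • (ε • (φ fx) + (δ * cx) • x)}) :=
  intersection_singleton_general K p c φ x ε δ hp hc0 hhom hconv hcpt hδ cx hcx fx hfx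
end
end

section
/- If x is (φ,ε,δ)-feasible and ‖x‖ > ε, then every f_x ∈ E(φ,x,ε,δ) satisfies the error constraint with equality: ‖x − φ(f_x)‖ = ε + δ·(β(φ,x,ε,δ))^{1/p}. -/
open scoped ENNReal RealInnerProductSpace Pointwise
open Metric Set

noncomputable section

variable {H : Type*} [NormedAddCommGroup H] [InnerProductSpace ℝ H]

/-- If `x` is `(φ,ε,δ)`-feasible and `‖x‖ > ε`, then every
`fₓ ∈ E(φ,x,ε,δ)` satisfies `‖x − φ fₓ‖ = ε + δ (β(φ,x,ε,δ))^(1/p)`. -/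
theorem error_constraint_active
    [FiniteDimensional ℝ H]
    (K : ℕ) (p : ℝ) (c : (Fin K → ℝ) → ℝ)
    (φ : (Fin K → ℝ) →ₗ[ℝ] H) (x : H) (ε δ : ℝ)
    (hp : 0 < p) (hc0 : ∀ f, 0 ≤ c f)
    (hhom : ∀ (α : ℝ) (f : Fin K → ℝ), 0 ≤ α → c (α • f) = α ^ p * c f)
    (hconv : Convex ℝ {f | c f ≤ 1}) (hcpt : IsCompact {f | c f ≤ 1})
    (hε : 0 ≤ ε) (hδ : 0 ≤ δ)
    (hfeas : lipVal K p c φ x ε δ ≠ ⊤) (hx : ε < ‖x‖) :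
    ∀ fx ∈ lipEnc K p c φ x ε δ,
      ‖x - φ fx‖ = ε + δ * (lipVal K p c φ x ε δ).toReal ^ (1 / p) := by
  intro fx hfx
  obtain ⟨𝔠, ⟨hcf, hferr⟩, hopt⟩ := hfx
  have h𝔠0 : 0 ≤ 𝔠 := le_trans (Real.rpow_nonneg (hc0 fx) _) hcf
  rcases eq_or_lt_of_le h𝔠0 with h0 | hpos
  · -- case 𝔠 = 0 : contradiction with ε < ‖x‖
    exfalso
    have hcfx : c fx = 0 := by
      have h1 : c fx ^ (1 / p) = 0 :=
        le_antisymm (h0 ▸ hcf) (Real.rpow_nonneg (hc0 fx) _)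
      have h2 : (1 : ℝ) / p ≠ 0 := by positivity
      exact (Real.rpow_eq_zero (hc0 fx) h2).mp h1
    obtain ⟨R, hR⟩ := hcpt.isBounded.exists_norm_le
    have hfx0 : fx = 0 := by
      by_contra hne
      have hn : 0 < ‖fx‖ := norm_pos_iff.mpr hne
      set α := (R + 1) / ‖fx‖ with hα
      have h0mem : (0 : Fin K → ℝ) ∈ {f | c f ≤ 1} := by
        have : c ((0 : ℝ) • fx) = 0 ^ p * c fx := hhom 0 fx le_rfl
        simp only [zero_smul] at this
        rw [Set.mem_setOf_eq, this, Real.zero_rpow hp.ne']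
        norm_num
      have hR0 : 0 ≤ R := le_trans (norm_nonneg _) (hR _ h0mem)
      have hαpos : 0 ≤ α := by positivity
      have hmem : α • fx ∈ {f | c f ≤ 1} := by
        rw [Set.mem_setOf_eq, hhom α fx hαpos, hcfx]
        norm_num
      have := hR _ hmem
      rw [norm_smul, Real.norm_of_nonneg hαpos, hα, div_mul_cancel₀ _ hn.ne'] at this
      linarith
    rw [hfx0, map_zero, sub_zero, ← h0, mul_zero, add_zero] at hferr
    linarith
  · -- case 𝔠 > 0
    have hβ : (lipVal K p c φ x ε δ).toReal ^ (1 / p) = 𝔠 := by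
      rw [← hopt, ENNReal.toReal_ofReal (Real.rpow_nonneg h𝔠0 p), one_div,
        Real.rpow_rpow_inv h𝔠0 hp.ne']
    rw [hβ]
    by_contra hne
    have hlt : ‖x - φ fx‖ < ε + δ * 𝔠 := lt_of_le_of_ne hferr hne
    set g := ε + δ * 𝔠 - ‖x - φ fx‖ with hg
    have hgpos : 0 < g := by rw [hg]; linarith
    set M := ‖φ fx‖ + δ * 𝔠 with hM
    have hM0 : 0 ≤ M := by rw [hM]; positivity
    set t := 1 - min 1 (g / (M + 1)) with ht
    have ht0 : 0 ≤ t := by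
      have := min_le_left 1 (g / (M + 1))
      rw [ht]; linarith
    have ht1 : t < 1 := by
      have : 0 < min 1 (g / (M + 1)) := lt_min one_pos (div_pos hgpos (by linarith))
      rw [ht]; linarith
    have hmem : (t * 𝔠, t • fx) ∈ lipFeas K p c φ x ε δ := by
      constructor
      · show c (t • fx) ^ (1 / p) ≤ t * 𝔠
        rw [hhom t fx ht0, one_div, Real.mul_rpow (Real.rpow_nonneg ht0 p) (hc0 fx),
          Real.rpow_rpow_inv ht0 hp.ne']
        rw [one_div] at hcf
        exact mul_le_mul_of_nonneg_left hcf ht0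
      · show ‖x - φ (t • fx)‖ ≤ ε + δ * (t * 𝔠)
        have h1 : x - φ (t • fx) = (x - φ fx) + (1 - t) • φ fx := by
          rw [map_smul]
          module
        have h2 : ‖x - φ (t • fx)‖ ≤ ‖x - φ fx‖ + (1 - t) * ‖φ fx‖ := by
          rw [h1]
          refine (norm_add_le _ _).trans ?_
          rw [norm_smul, Real.norm_of_nonneg (by linarith)]
        have h3 : (1 - t) * M ≤ g := by
          have h4 : 1 - t = min 1 (g / (M + 1)) := by rw [ht]; ring
          calc (1 - t) * M ≤ (g / (M + 1)) * M := by
                exact mul_le_mul_of_nonneg_right (h4 ▸ min_le_right _ _) hM0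
            _ ≤ g := by
                rw [div_mul_eq_mul_div, div_le_iff₀ (by linarith : (0:ℝ) < M + 1)]
                nlinarith
        have h5 : (1 - t) * ‖φ fx‖ + (1 - t) * (δ * 𝔠) ≤ g := by
          have : (1 - t) * ‖φ fx‖ + (1 - t) * (δ * 𝔠) = (1 - t) * M := by rw [hM]; ring
          linarith [h3, this.le, this.ge]
        have h6 : δ * (t * 𝔠) = δ * 𝔠 - (1 - t) * (δ * 𝔠) := by ring
        rw [hg] at hgpos
        linarith
    have hle : lipVal K p c φ x ε δ ≤ ENNReal.ofReal ((t * 𝔠) ^ p) :=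
      sInf_le (Set.mem_image_of_mem _ hmem)
    have hltv : ENNReal.ofReal ((t * 𝔠) ^ p) < ENNReal.ofReal (𝔠 ^ p) := by
      rw [ENNReal.ofReal_lt_ofReal_iff (Real.rpow_pos_of_pos hpos p),
        Real.mul_rpow ht0 h𝔠0]
      calc t ^ p * 𝔠 ^ p < 1 * 𝔠 ^ p := by
            exact mul_lt_mul_of_pos_right (Real.rpow_lt_one ht0 ht1 hp)
              (Real.rpow_pos_of_pos hpos p)
        _ = 𝔠 ^ p := one_mul _
    exact lt_irrefl _ (lt_of_le_of_lt hle (hltv.trans_le hopt.le))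
end
end

section
/- If x is (φ,ε,δ)-feasible, then the reconstruction is unique: φ(f_x) = φ(g_x) for every f_x, g_x ∈ E(φ,x,ε,δ). -/
open scoped ENNReal RealInnerProductSpace Pointwise
open Metric Set

noncomputable section

variable {H : Type*} [NormedAddCommGroup H] [InnerProductSpace ℝ H]

set_option maxHeartbeats 2000000 in
/-- If `x` is `(φ,ε,δ)`-feasible, the reconstruction is unique:
`φ fₓ = φ gₓ` for all `fₓ, gₓ ∈ E(φ,x,ε,δ)`. -/
theorem reconstruction_unique
    [FiniteDimensional ℝ H]
    (K : ℕ) (p : ℝ) (c : (Fin K → ℝ) → ℝ)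
    (φ : (Fin K → ℝ) →ₗ[ℝ] H) (x : H) (ε δ : ℝ)
    (hp : 0 < p) (hc0 : ∀ f, 0 ≤ c f)
    (hhom : ∀ (α : ℝ) (f : Fin K → ℝ), 0 ≤ α → c (α • f) = α ^ p * c f)
    (hconv : Convex ℝ {f | c f ≤ 1}) (hcpt : IsCompact {f | c f ≤ 1})
    (hε : 0 ≤ ε) (hδ : 0 ≤ δ)
    (hfeas : lipVal K p c φ x ε δ ≠ ⊤) :
    ∀ fx ∈ lipEnc K p c φ x ε δ, ∀ gx ∈ lipEnc K p c φ x ε δ, φ fx = φ gx := by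
  intro fx hfx gx hgx
  obtain ⟨cf, ⟨hcf1, hcf2⟩, hcfval⟩ := hfx
  obtain ⟨cg, ⟨hcg1, hcg2⟩, hcgval⟩ := hgx
  have hpp : p ≠ 0 := hp.ne'
  have hcf0 : (0:ℝ) ≤ cf := le_trans (Real.rpow_nonneg (hc0 fx) _) hcf1
  have hcg0 : (0:ℝ) ≤ cg := le_trans (Real.rpow_nonneg (hc0 gx) _) hcg1
  have hpow_eq : cf ^ p = cg ^ p := by
    have h := hcfval.trans hcgval.symm
    rwa [ENNReal.ofReal_eq_ofReal_iff (Real.rpow_nonneg hcf0 _) (Real.rpow_nonneg hcg0 _)] at h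
  have hcc : cf = cg := by
    have h1 : (cf ^ p) ^ (1/p) = cf := by
      rw [← Real.rpow_mul hcf0, mul_one_div_cancel hpp, Real.rpow_one]
    have h2 : (cg ^ p) ^ (1/p) = cg := by
      rw [← Real.rpow_mul hcg0, mul_one_div_cancel hpp, Real.rpow_one]
    rw [← h1, ← h2, hpow_eq]
  subst hcc
  rcases eq_or_lt_of_le hcf0 with h0 | hcpos
  · -- the optimal multiplier is 0; both fx and gx must be 0
    have hzero : ∀ f : Fin K → ℝ, c f ^ (1/p) ≤ cf → f = 0 := by
      intro f hf
      have hcfz : c f = 0 := by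
        have h1 : c f ^ (1/p) = 0 :=
          le_antisymm (h0 ▸ hf) (Real.rpow_nonneg (hc0 f) _)
        have h2 : (c f ^ (1/p)) ^ p = 0 := by rw [h1]; exact Real.zero_rpow hpp
        rwa [← Real.rpow_mul (hc0 f), one_div_mul_cancel hpp, Real.rpow_one] at h2
      by_contra hfne
      obtain ⟨R, hR⟩ := hcpt.isBounded.subset_closedBall 0
      have hfpos : 0 < ‖f‖ := norm_pos_iff.mpr hfne
      set α := (|R| + 1) / ‖f‖ with hα
      have hαpos : 0 < α := div_pos (by positivity) hfpos
      have hmem : α • f ∈ {f | c f ≤ 1} := by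
        have hh := hhom α f hαpos.le
        simp only [Set.mem_setOf_eq, hh, hcfz, mul_zero]
        exact zero_le_one
      have hball := hR hmem
      rw [Metric.mem_closedBall, dist_zero_right, norm_smul, Real.norm_eq_abs,
        abs_of_pos hαpos, hα, div_mul_cancel₀ _ hfpos.ne'] at hball
      nlinarith [le_abs_self R]
    rw [hzero fx hcf1, hzero gx hcg1]
  · -- the optimal multiplier is positive
    by_contra hne
    set a := x - φ fx with ha
    set b := x - φ gx with hb
    have hab : a ≠ b := fun h => hne (sub_right_injective h)
    set m : Fin K → ℝ := (2⁻¹ : ℝ) • fx + (2⁻¹ : ℝ) • gx with hm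
    have hφm : φ m = (2⁻¹ : ℝ) • φ fx + (2⁻¹ : ℝ) • φ gx := by
      rw [hm, map_add, map_smul, map_smul]
    have hxm : x - φ m = (2⁻¹ : ℝ) • (a + b) := by
      rw [hφm, ha, hb]; module
    -- bound on c m
    have hcfx_le : c fx ≤ cf ^ p := by
      have h1 := Real.rpow_le_rpow (Real.rpow_nonneg (hc0 fx) _) hcf1 hp.le
      rwa [← Real.rpow_mul (hc0 fx), one_div_mul_cancel hpp, Real.rpow_one] at h1
    have hcgx_le : c gx ≤ cf ^ p := by
      have h1 := Real.rpow_le_rpow (Real.rpow_nonneg (hc0 gx) _) hcg1 hp.le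
      rwa [← Real.rpow_mul (hc0 gx), one_div_mul_cancel hpp, Real.rpow_one] at h1
    have hinvp : cf⁻¹ ^ p * cf ^ p = 1 := by
      rw [← Real.mul_rpow (inv_nonneg.mpr hcf0) hcf0, inv_mul_cancel₀ hcpos.ne',
        Real.one_rpow]
    have hinvp0 : 0 ≤ cf⁻¹ ^ p := Real.rpow_nonneg (inv_nonneg.mpr hcf0) _
    have hVfx : cf⁻¹ • fx ∈ {f | c f ≤ 1} := by
      have hh := hhom cf⁻¹ fx (inv_nonneg.mpr hcf0)
      simp only [Set.mem_setOf_eq, hh]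
      calc cf⁻¹ ^ p * c fx ≤ cf⁻¹ ^ p * cf ^ p :=
            mul_le_mul_of_nonneg_left hcfx_le hinvp0
        _ = 1 := hinvp
    have hVgx : cf⁻¹ • gx ∈ {f | c f ≤ 1} := by
      have hh := hhom cf⁻¹ gx (inv_nonneg.mpr hcf0)
      simp only [Set.mem_setOf_eq, hh]
      calc cf⁻¹ ^ p * c gx ≤ cf⁻¹ ^ p * cf ^ p :=
            mul_le_mul_of_nonneg_left hcgx_le hinvp0
        _ = 1 := hinvp
    have hVm : cf⁻¹ • m ∈ {f | c f ≤ 1} := by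
      have hmem := hconv hVfx hVgx (by norm_num : (0:ℝ) ≤ 2⁻¹)
        (by norm_num : (0:ℝ) ≤ 2⁻¹) (by norm_num)
      have heq : (2⁻¹ : ℝ) • (cf⁻¹ • fx) + (2⁻¹ : ℝ) • (cf⁻¹ • gx) = cf⁻¹ • m := by
        rw [hm]; module
      rwa [heq] at hmem
    have hcm : c m ≤ cf ^ p := by
      have hmeq : m = cf • (cf⁻¹ • m) := (smul_inv_smul₀ hcpos.ne' m).symm
      rw [hmeq, hhom cf _ hcf0]
      calc cf ^ p * c (cf⁻¹ • m) ≤ cf ^ p * 1 :=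
            mul_le_mul_of_nonneg_left hVm (Real.rpow_nonneg hcf0 _)
        _ = cf ^ p := mul_one _
    -- strict norm bound at the midpoint
    set r : ℝ := ε + δ * cf with hr
    have hanorm : ‖a‖ ≤ r := hcf2
    have hbnorm : ‖b‖ ≤ r := hcg2
    have habpos : 0 < ‖a - b‖ := by
      rw [norm_pos_iff, sub_ne_zero]; exact hab
    have hpar := parallelogram_law_with_norm ℝ a b
    have hN : ‖a + b‖ < 2 * r := by
      have h2 : ‖a + b‖ ^ 2 < (2 * r) ^ 2 := by
        nlinarith [norm_nonneg a, norm_nonneg b, norm_nonneg (a + b)]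
      have hr0 : (0:ℝ) ≤ 2 * r := by nlinarith [norm_nonneg a]
      exact lt_of_pow_lt_pow_left₀ 2 hr0 h2
    have hstrict : ‖x - φ m‖ < r := by
      rw [hxm, norm_smul]
      have : ‖(2⁻¹ : ℝ)‖ = 2⁻¹ := by norm_num
      rw [this]; linarith
    set gsep : ℝ := r - ‖x - φ m‖ with hgsep
    have hg : 0 < gsep := by rw [hgsep]; linarith
    set Mq : ℝ := ‖φ m‖ + δ * cf + 1 with hMq
    have hM : 0 < Mq := by
      have := norm_nonneg (φ m)
      have := mul_nonneg hδ hcf0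
      rw [hMq]; linarith
    set t : ℝ := 1 - min (gsep / Mq) 2⁻¹ with htdef
    have hmin_pos : 0 < min (gsep / Mq) 2⁻¹ := lt_min (div_pos hg hM) (by norm_num)
    have hmin_le : min (gsep / Mq) 2⁻¹ ≤ 2⁻¹ := min_le_right _ _
    have ht1 : t < 1 := by rw [htdef]; linarith
    have ht0 : 0 < t := by rw [htdef]; linarith
    -- feasibility of (t*cf, t•m)
    have fe1 : c (t • m) ^ (1/p) ≤ t * cf := by
      have h1 : c (t • m) ≤ (t * cf) ^ p := by
        rw [hhom t m ht0.le, Real.mul_rpow ht0.le hcf0]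
        exact mul_le_mul_of_nonneg_left hcm (Real.rpow_nonneg ht0.le _)
      calc c (t • m) ^ (1/p) ≤ ((t * cf) ^ p) ^ (1/p) :=
            Real.rpow_le_rpow (hc0 _) h1 (by positivity)
        _ = t * cf := by
            rw [← Real.rpow_mul (mul_nonneg ht0.le hcf0), mul_one_div_cancel hpp,
              Real.rpow_one]
    have fe2 : ‖x - φ (t • m)‖ ≤ ε + δ * (t * cf) := by
      have hφt : φ (t • m) = t • φ m := map_smul φ t m
      have hsplit : x - φ (t • m) = (x - φ m) + (1 - t) • φ m := by
        rw [hφt]; module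
      have hnb : ‖x - φ (t • m)‖ ≤ ‖x - φ m‖ + (1 - t) * ‖φ m‖ := by
        rw [hsplit]
        refine (norm_add_le _ _).trans ?_
        rw [norm_smul, Real.norm_eq_abs, abs_of_nonneg (by linarith : (0:ℝ) ≤ 1 - t)]
      have hkey : (1 - t) * (‖φ m‖ + δ * cf) ≤ gsep := by
        have h1 : 1 - t ≤ gsep / Mq := by rw [htdef]; simpa using min_le_left _ _
        have h2 : (0:ℝ) ≤ ‖φ m‖ + δ * cf := by
          have := norm_nonneg (φ m); have := mul_nonneg hδ hcf0; linarith
        calc (1 - t) * (‖φ m‖ + δ * cf) ≤ (gsep / Mq) * (‖φ m‖ + δ * cf) :=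
              mul_le_mul_of_nonneg_right h1 h2
          _ ≤ (gsep / Mq) * Mq := by
              refine mul_le_mul_of_nonneg_left ?_ (le_of_lt (div_pos hg hM))
              rw [hMq]; linarith
          _ = gsep := div_mul_cancel₀ _ hM.ne'
      have : ‖x - φ m‖ + (1 - t) * ‖φ m‖ ≤ ε + δ * (t * cf) := by
        have hexp : ε + δ * (t * cf) = r - δ * ((1 - t) * cf) := by rw [hr]; ring
        rw [hexp]
        have h3 : (1 - t) * ‖φ m‖ + δ * ((1 - t) * cf) ≤ gsep := by
          have heq3 : (1 - t) * ‖φ m‖ + δ * ((1 - t) * cf)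
              = (1 - t) * (‖φ m‖ + δ * cf) := by ring
          rw [heq3]; exact hkey
        rw [hgsep] at h3; linarith
      linarith
    -- contradiction with optimality
    have hle : lipVal K p c φ x ε δ ≤ ENNReal.ofReal ((t * cf) ^ p) := by
      have hmemF : ((t * cf, t • m) : ℝ × (Fin K → ℝ)) ∈ lipFeas K p c φ x ε δ :=
        ⟨fe1, fe2⟩
      have hmemI : ENNReal.ofReal ((t * cf) ^ p) ∈
          ((fun cf : ℝ × (Fin K → ℝ) => ENNReal.ofReal (cf.1 ^ p)) ''
            lipFeas K p c φ x ε δ) := ⟨(t * cf, t • m), hmemF, rfl⟩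
      exact sInf_le hmemI
    have hlt : (t * cf) ^ p < cf ^ p :=
      Real.rpow_lt_rpow (mul_nonneg ht0.le hcf0) (by nlinarith [mul_pos (by linarith : (0:ℝ) < 1 - t) hcpos]) hp
    have hfin : ENNReal.ofReal ((t * cf) ^ p) < ENNReal.ofReal (cf ^ p) :=
      (ENNReal.ofReal_lt_ofReal_iff_of_nonneg
        (Real.rpow_nonneg (mul_nonneg ht0.le hcf0) _)).mpr hlt
    have : lipVal K p c φ x ε δ < lipVal K p c φ x ε δ := by
      calc lipVal K p c φ x ε δ ≤ ENNReal.ofReal ((t * cf) ^ p) := hle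
        _ < ENNReal.ofReal (cf ^ p) := hfin
        _ = lipVal K p c φ x ε δ := hcfval
    exact absurd this (lt_irrefl _)
end
end

section
/- For every λ ∈ H, the dual function satisfies ‖λ‖'_φ = δ‖λ‖ + max{ ⟨λ, φ(h)⟩ : h ∈ ℝ^K, c(h) ≤ 1 }. Furthermore: (i) if δ > 0, then ‖λ‖'_φ > 0 for every λ ∈ H with λ ≠ 0; (ii) if δ = 0 and λ ≠ 0 satisfies ‖λ‖'_φ = 0, then ⟨λ,x⟩ − ε‖λ‖ ≤ 0 for every (φ,ε,0)-feasible vector x ∈ H. -/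
open scoped ENNReal RealInnerProductSpace Pointwise
open Metric Set

noncomputable section

variable {H : Type*} [NormedAddCommGroup H] [InnerProductSpace ℝ H]

/-- `‖λ‖'_φ = δ‖λ‖ + max { ⟨λ, φ h⟩ : c h ≤ 1 }` (the maximum being
attained); moreover (i) if `δ > 0` then `‖λ‖'_φ > 0` for every `λ ≠ 0`; (ii) if `δ = 0`
and `λ ≠ 0` with `‖λ‖'_φ = 0`, then `⟨λ,x⟩ − ε‖λ‖ ≤ 0` for every `(φ,ε,0)`-feasible `x`. -/
theorem lipDual_formula
    [FiniteDimensional ℝ H]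
    (K : ℕ) (p : ℝ) (c : (Fin K → ℝ) → ℝ)
    (φ : (Fin K → ℝ) →ₗ[ℝ] H) (ε δ : ℝ)
    (hp : 0 < p) (hc0 : ∀ f, 0 ≤ c f)
    (hhom : ∀ (α : ℝ) (f : Fin K → ℝ), 0 ≤ α → c (α • f) = α ^ p * c f)
    (hconv : Convex ℝ {f | c f ≤ 1}) (hcpt : IsCompact {f | c f ≤ 1})
    (hε : 0 ≤ ε) (hδ : 0 ≤ δ) :
    (∀ l : H, lipDual K c φ δ l
        = δ * ‖l‖ + sSup ((fun h => ⟪l, φ h⟫) '' {h | c h ≤ 1}) ∧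
      ∃ h₀, c h₀ ≤ 1 ∧ ⟪l, φ h₀⟫ = sSup ((fun h => ⟪l, φ h⟫) '' {h | c h ≤ 1})) ∧
    (0 < δ → ∀ l : H, l ≠ 0 → 0 < lipDual K c φ δ l) ∧
    (δ = 0 → ∀ l : H, l ≠ 0 → lipDual K c φ δ l = 0 →
      ∀ x : H, lipVal K p c φ x ε 0 ≠ ⊤ → ⟪l, x⟫ - ε * ‖l‖ ≤ 0) := by

  -- c 0 = 0, so 0 ∈ V
  have hc0zero : c (0 : Fin K → ℝ) = 0 := by
    have h := hhom 0 0 le_rfl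
    rw [smul_zero, Real.zero_rpow hp.ne', zero_mul] at h
    exact h
  have h0V : (0 : Fin K → ℝ) ∈ {h | c h ≤ 1} := by
    simp [hc0zero]
  have hVne : ({h | c h ≤ 1} : Set (Fin K → ℝ)).Nonempty := ⟨0, h0V⟩
  -- maximizer of ⟪l, φ h⟫ over V
  have hmax : ∀ l : H, ∃ h₀ ∈ {h : Fin K → ℝ | c h ≤ 1},
      (∀ h ∈ {h : Fin K → ℝ | c h ≤ 1}, ⟪l, φ h⟫ ≤ ⟪l, φ h₀⟫) ∧
      ⟪l, φ h₀⟫ = sSup ((fun h => ⟪l, φ h⟫) '' {h | c h ≤ 1}) := by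
    intro l
    have hcont : Continuous fun h : Fin K → ℝ => ⟪l, φ h⟫ :=
      Continuous.inner continuous_const φ.continuous_of_finiteDimensional
    obtain ⟨h₀, h₀V, hmax⟩ := hcpt.exists_isMaxOn hVne hcont.continuousOn
    have hub : ∀ h ∈ {h : Fin K → ℝ | c h ≤ 1}, ⟪l, φ h⟫ ≤ ⟪l, φ h₀⟫ := fun h hh => hmax hh
    have hgr : IsGreatest ((fun h => ⟪l, φ h⟫) '' {h | c h ≤ 1}) ⟪l, φ h₀⟫ :=
      ⟨⟨h₀, h₀V, rfl⟩, by rintro y ⟨h, hh, rfl⟩; exact hub h hh⟩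
    exact ⟨h₀, h₀V, hub, hgr.csSup_eq.symm⟩
  -- the main formula, with attainment
  have main : ∀ l : H, lipDual K c φ δ l
      = δ * ‖l‖ + sSup ((fun h => ⟪l, φ h⟫) '' {h | c h ≤ 1}) := by
    intro l
    obtain ⟨h₀, h₀V, hub, hMeq⟩ := hmax l
    set M := sSup ((fun h => ⟪l, φ h⟫) '' {h | c h ≤ 1}) with hM
    refine IsGreatest.csSup_eq ⟨?_, ?_⟩
    · -- attained at z₀ = φ h₀ + δ • (‖l‖⁻¹ • l)
      have hzmem : φ h₀ + δ • (‖l‖⁻¹ • l) ∈ lipSet K c φ δ := by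
        refine ⟨h₀, h₀V, ?_⟩
        rw [add_sub_cancel_left, norm_smul, norm_smul, norm_inv, norm_norm,
          Real.norm_eq_abs, abs_of_nonneg hδ]
        rcases eq_or_ne l 0 with rfl | hl
        · simpa using hδ
        · rw [inv_mul_cancel₀ (norm_ne_zero_iff.mpr hl), mul_one]
      refine ⟨_, hzmem, ?_⟩
      show ⟪l, φ h₀ + δ • (‖l‖⁻¹ • l)⟫ = δ * ‖l‖ + M
      rw [inner_add_right, inner_smul_right, inner_smul_right,
        real_inner_self_eq_norm_mul_norm, hMeq]
      rcases eq_or_ne l 0 with rfl | hl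
      · simp
      · have hln : ‖l‖ ≠ 0 := norm_ne_zero_iff.mpr hl
        rw [← mul_assoc ‖l‖⁻¹, inv_mul_cancel₀ hln, one_mul, add_comm]
    · rintro y ⟨z, ⟨f, hf, hzf⟩, rfl⟩
      have h1 : ⟪l, z⟫ = ⟪l, z - φ f⟫ + ⟪l, φ f⟫ := by
        rw [← inner_add_right]; simp
      have h2 : ⟪l, z - φ f⟫ ≤ ‖l‖ * ‖z - φ f‖ := real_inner_le_norm l _
      have h3 : ⟪l, φ f⟫ ≤ M := by rw [← hMeq]; exact hub f hf
      calc ⟪l, z⟫ ≤ ‖l‖ * ‖z - φ f‖ + M := by rw [h1]; gcongr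
        _ ≤ ‖l‖ * δ + M := by gcongr
        _ = δ * ‖l‖ + M := by ring
  refine ⟨fun l => ⟨main l, ?_⟩, ?_, ?_⟩
  · obtain ⟨h₀, h₀V, _, hMeq⟩ := hmax l
    exact ⟨h₀, h₀V, hMeq⟩
  · -- (i)
    intro hδpos l hl
    obtain ⟨h₀, h₀V, hub, hMeq⟩ := hmax l
    have hM0 : 0 ≤ sSup ((fun h => ⟪l, φ h⟫) '' {h | c h ≤ 1}) := by
      rw [← hMeq]
      have := hub 0 h0V
      simpa using this
    have : 0 < δ * ‖l‖ := mul_pos hδpos (norm_pos_iff.mpr hl)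
    rw [main l]; linarith
  · -- (ii)
    intro hδ0 l hl hdual x hx
    obtain ⟨h₀, h₀V, hub, hMeq⟩ := hmax l
    have hM0 : sSup ((fun h => ⟪l, φ h⟫) '' {h | c h ≤ 1}) = 0 := by
      have := main l
      rw [hdual, hδ0, zero_mul, zero_add] at this
      exact this.symm
    have hubz : ∀ h : Fin K → ℝ, c h ≤ 1 → ⟪l, φ h⟫ ≤ 0 := by
      intro h hh
      have := hub h hh
      rw [hMeq, hM0] at this
      exact this
    -- every f has ⟪l, φ f⟫ ≤ 0
    have hall : ∀ f : Fin K → ℝ, ⟪l, φ f⟫ ≤ 0 := by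
      intro f
      by_cases hcf : c f ≤ 1
      · exact hubz f hcf
      · have hcfpos : 0 < c f := lt_trans one_pos (not_le.mp hcf)
        set a : ℝ := c f ^ (-(1 / p)) with ha
        have hapos : 0 < a := Real.rpow_pos_of_pos hcfpos _
        have hcg : c (a • f) = 1 := by
          rw [hhom a f hapos.le, ha, ← Real.rpow_mul hcfpos.le]
          have hpe : -(1 / p) * p = -1 := by field_simp
          rw [hpe, Real.rpow_neg_one]
          exact inv_mul_cancel₀ hcfpos.ne' 
        have hg := hubz (a • f) (le_of_eq hcg)
        rw [map_smul, inner_smul_right] at hg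
        nlinarith
    -- feasibility gives f with ‖x - φ f‖ ≤ ε
    rcases (lipFeas K p c φ x ε 0).eq_empty_or_nonempty with he | ⟨⟨𝔠, f⟩, h1, h2⟩
    · exfalso; apply hx
      unfold lipVal
      rw [he, Set.image_empty, sInf_empty]
    · simp only [mul_zero, zero_mul, add_zero] at h2
      have h3 : ⟪l, x⟫ = ⟪l, x - φ f⟫ + ⟪l, φ f⟫ := by
        rw [← inner_add_right]; simp
      have h4 : ⟪l, x - φ f⟫ ≤ ‖l‖ * ‖x - φ f‖ := real_inner_le_norm l _
      have h5 : ‖l‖ * ‖x - φ f‖ ≤ ‖l‖ * ε := by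
        apply mul_le_mul_of_nonneg_left h2 (norm_nonneg l)
      have h6 := hall f
      nlinarith
end
end

section
/- Let x be (φ,ε,δ)-feasible with ‖x‖ > ε, suppose Λ_δ(φ,x,ε) ≠ ∅, write 𝔠_x := (β(φ,x,ε,δ))^{1/p}, and let y* denote the unique point of B̄(x,ε) ∩ 𝔠_x·S_δ(φ,1). Then every λ* ∈ Λ_δ(φ,x,ε) separates the two sets and supports both at y*: max{⟨λ*,z⟩ : z ∈ 𝔠_x·S_δ(φ,1)} = ⟨λ*, y*⟩ = min{⟨λ*,y⟩ : y ∈ B̄(x,ε)}. -/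
open scoped ENNReal RealInnerProductSpace Pointwise
open Metric Set

noncomputable section

variable {H : Type*} [NormedAddCommGroup H] [InnerProductSpace ℝ H]

/-- If `x` is feasible with `‖x‖ > ε`, `Λ_δ(φ,x,ε) ≠ ∅`, `𝔠ₓ := β^(1/p)`,
and `B̄(x,ε) ∩ 𝔠ₓ • S_δ(φ,1) = {y*}`, then every `λ* ∈ Λ_δ(φ,x,ε)` separates the two sets
and supports both at `y*`. -/
theorem lambda_separates
    [FiniteDimensional ℝ H]
    (K : ℕ) (p : ℝ) (c : (Fin K → ℝ) → ℝ)
    (φ : (Fin K → ℝ) →ₗ[ℝ] H) (x : H) (ε δ : ℝ)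
    (hp : 0 < p) (hc0 : ∀ f, 0 ≤ c f)
    (hhom : ∀ (α : ℝ) (f : Fin K → ℝ), 0 ≤ α → c (α • f) = α ^ p * c f)
    (hconv : Convex ℝ {f | c f ≤ 1}) (hcpt : IsCompact {f | c f ≤ 1})
    (hε : 0 ≤ ε) (hδ : 0 ≤ δ)
    (hfeas : lipVal K p c φ x ε δ ≠ ⊤) (hx : ε < ‖x‖)
    (hne : (lipLambda K p c φ x ε δ).Nonempty)
    (cx : ℝ) (hcx : cx = (lipVal K p c φ x ε δ).toReal ^ (1 / p))
    (ystar : H) (hy : closedBall x ε ∩ cx • lipSet K c φ δ = {ystar}) :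
    ∀ l ∈ lipLambda K p c φ x ε δ,
      (∀ z ∈ cx • lipSet K c φ δ, ⟪l, z⟫ ≤ ⟪l, ystar⟫) ∧
      (∀ y ∈ closedBall x ε, ⟪l, ystar⟫ ≤ ⟪l, y⟫) := by
  intro l hl
  obtain ⟨hl1, hl2⟩ := hl
  have hyst : ystar ∈ closedBall x ε ∩ cx • lipSet K c φ δ := by
    rw [hy]; exact rfl
  obtain ⟨hyb, hys⟩ := hyst
  have hcx0 : 0 ≤ cx := by
    rw [hcx]; positivity
  -- cx ≠ 0
  have hcxpos : 0 < cx := by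
    rcases hcx0.lt_or_eq with h | h
    · exact h
    · exfalso
      obtain ⟨w, hw, hww⟩ := hys
      have hww' : ystar = 0 := by rw [← hww, ← h]; simp
      have h1 : dist ystar x ≤ ε := mem_closedBall.mp hyb
      rw [hww', dist_zero_left] at h1
      exact absurd h1 (not_le.mpr hx)
  -- identify cx with ⟪l,x⟫ - ε‖l‖
  have htr : (lipVal K p c φ x ε δ ^ (1 / p)).toReal = cx := by
    rw [← ENNReal.toReal_rpow, hcx]
  have ha : ⟪l, x⟫ - ε * ‖l‖ = cx := by
    rcases le_or_gt (⟪l, x⟫ - ε * ‖l‖) 0 with h | h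
    · exfalso
      rw [ENNReal.ofReal_eq_zero.mpr h] at hl2
      rw [← hl2] at htr
      simp at htr
      exact hcxpos.ne' htr.symm
    · rw [← htr, ← hl2, ENNReal.toReal_ofReal h.le]
  -- bound on S
  have hφc : Continuous φ := φ.continuous_of_finiteDimensional
  have hVc : IsCompact (φ '' {f | c f ≤ 1}) := hcpt.image hφc
  obtain ⟨M, hM⟩ := Bornology.IsBounded.exists_norm_le hVc.isBounded
  have hbdd : BddAbove ((fun z => ⟪l, z⟫) '' lipSet K c φ δ) := by
    refine ⟨‖l‖ * (M + δ), ?_⟩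
    rintro y ⟨z, ⟨f, hf, hzf⟩, rfl⟩
    have hMf : ‖φ f‖ ≤ M := hM _ ⟨f, hf, rfl⟩
    have hz : ‖z‖ ≤ M + δ := by
      have : ‖z‖ ≤ ‖φ f‖ + ‖z - φ f‖ := by
        have := norm_add_le (φ f) (z - φ f)
        simpa using this
      linarith
    calc ⟪l, z⟫ ≤ ‖l‖ * ‖z‖ := real_inner_le_norm l z
      _ ≤ ‖l‖ * (M + δ) := by
          exact mul_le_mul_of_nonneg_left hz (norm_nonneg l)
  have hsup : ∀ w ∈ lipSet K c φ δ, ⟪l, w⟫ ≤ 1 := by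
    intro w hw
    rw [← hl1]
    exact le_csSup hbdd (mem_image_of_mem _ hw)
  have hzbound : ∀ z ∈ cx • lipSet K c φ δ, ⟪l, z⟫ ≤ cx := by
    rintro z ⟨w, hw, rfl⟩
    rw [real_inner_smul_right]
    calc cx * ⟪l, w⟫ ≤ cx * 1 := mul_le_mul_of_nonneg_left (hsup w hw) hcx0
      _ = cx := mul_one cx
  have hball : ∀ y ∈ closedBall x ε, cx ≤ ⟪l, y⟫ := by
    intro y hyy
    have hd : ‖y - x‖ ≤ ε := by
      have := mem_closedBall.mp hyy
      rwa [dist_eq_norm] at this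
    have h1 : |⟪l, y - x⟫| ≤ ‖l‖ * ‖y - x‖ := abs_real_inner_le_norm l (y - x)
    have h2 : ⟪l, y - x⟫ = ⟪l, y⟫ - ⟪l, x⟫ := by
      rw [inner_sub_right]
    have h3 : ‖l‖ * ‖y - x‖ ≤ ‖l‖ * ε := mul_le_mul_of_nonneg_left hd (norm_nonneg l)
    have h4 := neg_abs_le ⟪l, y - x⟫
    nlinarith [ha]
  have hystar : ⟪l, ystar⟫ = cx :=
    le_antisymm (hzbound ystar hys) (hball ystar hyb)
  constructor
  · intro z hz
    rw [hystar]; exact hzbound z hz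
  · intro y hyy
    rw [hystar]; exact hball y hyy
end
end

section
/- Suppose ε = δ = 0, x is (φ,0,0)-feasible (equivalently, x ∈ image(φ)), and ‖x‖ > 0. Then the set Λ_0(φ,x,0) is nonempty; in fact Λ_0(φ,x,0) ∩ image(φ) ≠ ∅. Moreover, λ* ∈ Λ_0(φ,x,0) if and only if ‖λ*‖'_φ = 1 and the linear functional ⟨λ*,·⟩ supports the set (β(φ,x,0,0))^{1/p}·S_0(φ,1) at x, i.e., ⟨λ*, x⟩ = max{⟨λ*,z⟩ : z ∈ (β(φ,x,0,0))^{1/p}·S_0(φ,1)}. -/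
open scoped ENNReal RealInnerProductSpace Pointwise
open Metric Set

noncomputable section

variable {H : Type*} [NormedAddCommGroup H] [InnerProductSpace ℝ H]

lemma aux_c_zero {K : ℕ} {p : ℝ} {c : (Fin K → ℝ) → ℝ} (hp : 0 < p)
    (hhom : ∀ (α : ℝ) (f : Fin K → ℝ), 0 ≤ α → c (α • f) = α ^ p * c f) : c 0 = 0 := by
  have h := hhom 0 0 le_rfl
  simpa [Real.zero_rpow hp.ne'] using h

lemma aux_c_eq_zero {K : ℕ} {p : ℝ} {c : (Fin K → ℝ) → ℝ} (hp : 0 < p)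
    (hhom : ∀ (α : ℝ) (f : Fin K → ℝ), 0 ≤ α → c (α • f) = α ^ p * c f)
    (hcpt : IsCompact {f | c f ≤ 1}) {f : Fin K → ℝ} (hf : c f = 0) : f = 0 := by
  obtain ⟨R, hR⟩ := isBounded_iff_forall_norm_le.1 hcpt.isBounded
  by_contra hf0
  have hnf : 0 < ‖f‖ := norm_pos_iff.2 hf0
  have hR0 : 0 ≤ R := le_trans (norm_nonneg _) (hR 0 (by
    simp only [Set.mem_setOf_eq, aux_c_zero hp hhom]; norm_num))
  set α : ℝ := (R + 1) / ‖f‖ with hα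
  have hαpos : 0 < α := div_pos (by linarith) hnf
  have hmem : α • f ∈ {f | c f ≤ 1} := by
    simp only [Set.mem_setOf_eq, hhom α f hαpos.le, hf, mul_zero]; norm_num
  have := hR _ hmem
  rw [norm_smul, Real.norm_eq_abs, abs_of_pos hαpos, hα, div_mul_cancel₀ _ hnf.ne'] at this
  linarith

lemma aux_scale {K : ℕ} {p : ℝ} {c : (Fin K → ℝ) → ℝ} {φ : (Fin K → ℝ) →ₗ[ℝ] H}
    (hp : 0 < p) (hc0 : ∀ f, 0 ≤ c f)
    (hhom : ∀ (α : ℝ) (f : Fin K → ℝ), 0 ≤ α → c (α • f) = α ^ p * c f)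
    {t : ℝ} (ht : 0 < t) {y : H} :
    y ∈ t • (⇑φ '' {f | c f ≤ 1}) ↔ ∃ f, c f ≤ t ^ p ∧ φ f = y := by
  constructor
  · rintro ⟨z, ⟨f, hf, rfl⟩, rfl⟩
    refine ⟨t • f, ?_, by rw [map_smul]⟩
    rw [hhom t f ht.le]
    calc t ^ p * c f ≤ t ^ p * 1 :=
          mul_le_mul_of_nonneg_left hf (Real.rpow_nonneg ht.le p)
      _ = t ^ p := mul_one _
  · rintro ⟨f, hf, rfl⟩
    refine ⟨φ (t⁻¹ • f), ⟨t⁻¹ • f, ?_, rfl⟩, ?_⟩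
    · have : c (t⁻¹ • f) = (t ^ p)⁻¹ * c f := by
        rw [hhom t⁻¹ f (inv_nonneg.2 ht.le), Real.inv_rpow ht.le]
      rw [Set.mem_setOf_eq, this]
      calc (t ^ p)⁻¹ * c f ≤ (t ^ p)⁻¹ * t ^ p :=
            mul_le_mul_of_nonneg_left hf (inv_nonneg.2 (Real.rpow_nonneg ht.le p))
        _ = 1 := inv_mul_cancel₀ (Real.rpow_pos_of_pos ht p).ne'
    · show t • _ = _
      rw [map_smul, smul_smul, mul_inv_cancel₀ ht.ne', one_smul]

lemma aux_lipSet_eq {K : ℕ} {c : (Fin K → ℝ) → ℝ} {φ : (Fin K → ℝ) →ₗ[ℝ] H} :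
    lipSet K c φ 0 = ⇑φ '' {f | c f ≤ 1} := by
  ext z
  simp only [lipSet, Set.mem_setOf_eq, Set.mem_image]
  constructor
  · rintro ⟨f, hf, hz⟩
    exact ⟨f, hf, by have := norm_le_zero_iff.1 hz; rw [sub_eq_zero] at this; exact this.symm⟩
  · rintro ⟨f, hf, rfl⟩
    exact ⟨f, hf, by simp⟩

/-- For `ε = δ = 0`, `x ∈ image φ` with `‖x‖ > 0`: the set
`Λ_0(φ,x,0)` is nonempty — indeed `Λ_0(φ,x,0) ∩ image φ ≠ ∅` — and `λ* ∈ Λ_0(φ,x,0)`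
iff `‖λ*‖'_φ = 1` and `⟨λ*,·⟩` supports `β^(1/p) • S_0(φ,1)` at `x`, i.e.
`⟨λ*, x⟩ = max {⟨λ*, z⟩ : z ∈ β^(1/p) • S_0(φ,1)}`. -/
theorem lambda_zero_characterization
    [FiniteDimensional ℝ H]
    (K : ℕ) (p : ℝ) (c : (Fin K → ℝ) → ℝ)
    (φ : (Fin K → ℝ) →ₗ[ℝ] H) (x : H)
    (hp : 0 < p) (hc0 : ∀ f, 0 ≤ c f)
    (hhom : ∀ (α : ℝ) (f : Fin K → ℝ), 0 ≤ α → c (α • f) = α ^ p * c f)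
    (hconv : Convex ℝ {f | c f ≤ 1}) (hcpt : IsCompact {f | c f ≤ 1})
    (hx : x ∈ LinearMap.range φ) (hx0 : 0 < ‖x‖)
    (cx : ℝ) (hcx : cx = (lipVal K p c φ x 0 0).toReal ^ (1 / p)) :
    (lipLambda K p c φ x 0 0 ∩ (LinearMap.range φ : Set H)).Nonempty ∧
    ∀ l : H, l ∈ lipLambda K p c φ x 0 0 ↔
      (lipDual K c φ 0 l = 1 ∧
        IsGreatest ((fun z => ⟪l, z⟫) '' (cx • lipSet K c φ 0)) ⟪l, x⟫) := by
  classical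
  -- notation
  set V : Set (Fin K → ℝ) := {f | c f ≤ 1} with hV
  set C : Set H := ⇑φ '' V with hCdef
  have hS : lipSet K c φ 0 = C := aux_lipSet_eq
  have hφcont : Continuous φ := φ.continuous_of_finiteDimensional
  have hCcpt : IsCompact C := hcpt.image hφcont
  have h0V : (0 : Fin K → ℝ) ∈ V := by
    simp only [hV, Set.mem_setOf_eq, aux_c_zero hp hhom]; norm_num
  have h0C : (0 : H) ∈ C := ⟨0, h0V, map_zero φ⟩
  have hxne : x ≠ 0 := fun h => by simp [h] at hx0
  -- the scaling set T and its infimum t0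
  set T : Set ℝ := {t | 0 < t ∧ x ∈ t • C} with hT
  obtain ⟨f0, hf0⟩ := hx
  have hcf0 : 0 < c f0 := by
    rcases (hc0 f0).lt_or_eq with h | h
    · exact h
    · exfalso
      apply hxne
      rw [← hf0, aux_c_eq_zero hp hhom hcpt h.symm, map_zero]
  have hTne : T.Nonempty := by
    refine ⟨(c f0) ^ (1 / p), Real.rpow_pos_of_pos hcf0 _, ?_⟩
    rw [aux_scale hp hc0 hhom (Real.rpow_pos_of_pos hcf0 _)]
    refine ⟨f0, ?_, hf0⟩
    rw [one_div, Real.rpow_inv_rpow (hc0 f0) hp.ne']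
  have hTbdd : BddBelow T := ⟨0, fun t ht => ht.1.le⟩
  set t0 : ℝ := sInf T with ht0def
  have ht0pos : 0 < t0 := by
    obtain ⟨R, hR⟩ := isBounded_iff_forall_norm_le.1 hCcpt.isBounded
    have hR1 : (0:ℝ) < max R 1 := lt_of_lt_of_le one_pos (le_max_right _ _)
    have : ‖x‖ / max R 1 ≤ t0 := by
      apply le_csInf hTne
      rintro t ⟨htpos, z, hz, rfl⟩
      rw [div_le_iff₀ hR1, norm_smul, Real.norm_eq_abs, abs_of_pos htpos]
      exact mul_le_mul_of_nonneg_left (le_trans (hR z hz) (le_max_left _ _)) htpos.le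
    exact lt_of_lt_of_le (div_pos hx0 hR1) this
  have hxt0 : x ∈ t0 • C := by
    obtain ⟨u, -, hu, huT⟩ := exists_seq_tendsto_sInf hTne hTbdd
    have hmemC : ∀ n, (u n)⁻¹ • x ∈ C := by
      intro n
      obtain ⟨hun, z, hz, hxz⟩ := huT n
      have : (u n)⁻¹ • x = z := by rw [← hxz, smul_smul, inv_mul_cancel₀ hun.ne', one_smul]
      rw [this]; exact hz
    have huinv : Filter.Tendsto (fun n => (u n)⁻¹ • x) Filter.atTop (nhds (t0⁻¹ • x)) :=
      (hu.inv₀ ht0pos.ne').smul_const x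
    have hmem0 : t0⁻¹ • x ∈ C :=
      hCcpt.isClosed.mem_of_tendsto huinv (Filter.Eventually.of_forall hmemC)
    have := Set.smul_mem_smul_set (a := t0) hmem0
    rwa [smul_smul, mul_inv_cancel₀ ht0pos.ne', one_smul] at this
  -- the optimal value
  have hval : lipVal K p c φ x 0 0 = ENNReal.ofReal (t0 ^ p) := by
    apply le_antisymm
    · obtain ⟨f, hf, hfx⟩ := (aux_scale hp hc0 hhom ht0pos).1 hxt0
      apply sInf_le
      refine ⟨(t0, f), ⟨?_, ?_⟩, rfl⟩
      · calc c f ^ (1/p) ≤ (t0 ^ p) ^ (1/p) :=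
              Real.rpow_le_rpow (hc0 f) hf (by positivity)
          _ = t0 := by rw [one_div, Real.rpow_rpow_inv ht0pos.le hp.ne']
      · simp [hfx]
    · apply le_sInf
      rintro b ⟨⟨𝔠, f⟩, ⟨hfeas1, hfeas2⟩, rfl⟩
      simp only [zero_mul, add_zero, zero_add] at hfeas2
      have hφf : φ f = x := by
        have := norm_le_zero_iff.1 hfeas2
        rw [sub_eq_zero] at this; exact this.symm
      have hcf : 0 < c f := by
        rcases (hc0 f).lt_or_eq with h | h
        · exact h
        · exfalso; apply hxne
          rw [← hφf, aux_c_eq_zero hp hhom hcpt h.symm, map_zero]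
      have h𝔠pos : 0 < 𝔠 := lt_of_lt_of_le (Real.rpow_pos_of_pos hcf _) hfeas1
      have hcf𝔠 : c f ≤ 𝔠 ^ p := by
        calc c f = (c f ^ (1/p)) ^ p := by
              rw [one_div, Real.rpow_inv_rpow (hc0 f) hp.ne']
          _ ≤ 𝔠 ^ p := Real.rpow_le_rpow (Real.rpow_nonneg (hc0 f) _) hfeas1 hp.le
      have h𝔠T : 𝔠 ∈ T := ⟨h𝔠pos, (aux_scale hp hc0 hhom h𝔠pos).2 ⟨f, hcf𝔠, hφf⟩⟩
      have : t0 ≤ 𝔠 := csInf_le hTbdd h𝔠T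
      exact ENNReal.ofReal_le_ofReal (Real.rpow_le_rpow ht0pos.le this hp.le)
  have hcxt0 : cx = t0 := by
    rw [hcx, hval, ENNReal.toReal_ofReal (Real.rpow_nonneg ht0pos.le _), one_div,
      Real.rpow_rpow_inv ht0pos.le hp.ne']
  have hvp : lipVal K p c φ x 0 0 ^ (1/p) = ENNReal.ofReal t0 := by
    rw [hval, ENNReal.ofReal_rpow_of_pos (Real.rpow_pos_of_pos ht0pos _), one_div,
      Real.rpow_rpow_inv ht0pos.le hp.ne']
  -- raw membership characterization
  have hmem : ∀ l : H, l ∈ lipLambda K p c φ x 0 0 ↔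
      (lipDual K c φ 0 l = 1 ∧ ⟪l, x⟫ = t0) := by
    intro l
    simp only [lipLambda, Set.mem_setOf_eq, hvp, zero_mul, sub_zero]
    constructor
    · rintro ⟨h1, h2⟩
      refine ⟨h1, ?_⟩
      have hpos : 0 < ENNReal.ofReal ⟪l, x⟫ := h2 ▸ ENNReal.ofReal_pos.2 ht0pos
      exact (ENNReal.ofReal_eq_ofReal_iff (ENNReal.ofReal_pos.1 hpos).le ht0pos.le).1 h2
    · rintro ⟨h1, h2⟩
      exact ⟨h1, by rw [h2]⟩
  -- if lipDual l = 1 then the sup over C is attained and equals 1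
  have hgreat : ∀ l : H, lipDual K c φ 0 l = 1 →
      IsGreatest ((fun z => ⟪l, z⟫) '' C) 1 := by
    intro l hl
    have hDcpt : IsCompact ((fun z => ⟪l, z⟫) '' C) :=
      hCcpt.image (Continuous.inner continuous_const continuous_id)
    have hDne : ((fun z => ⟪l, z⟫) '' C).Nonempty := ⟨_, Set.mem_image_of_mem _ h0C⟩
    have h1 : IsGreatest ((fun z => ⟪l, z⟫) '' C) (sSup ((fun z => ⟪l, z⟫) '' C)) :=
      ⟨hDcpt.sSup_mem hDne, fun y hy => le_csSup hDcpt.bddAbove hy⟩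
    rwa [show sSup ((fun z => ⟪l, z⟫) '' C) = 1 from by rw [← hl, lipDual, hS]] at h1
  -- the characterization via IsGreatest
  have hiff : ∀ l : H, l ∈ lipLambda K p c φ x 0 0 ↔
      (lipDual K c φ 0 l = 1 ∧
        IsGreatest ((fun z => ⟪l, z⟫) '' (cx • lipSet K c φ 0)) ⟪l, x⟫) := by
    intro l
    rw [hmem l]
    constructor
    · rintro ⟨h1, h2⟩
      refine ⟨h1, ?_, ?_⟩
      · apply Set.mem_image_of_mem
        rw [hS, hcxt0]; exact hxt0
      · rintro y ⟨w, hw, rfl⟩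
        rw [hS, hcxt0] at hw
        obtain ⟨z, hz, rfl⟩ := hw
        have hle1 : ⟪l, z⟫ ≤ 1 := (hgreat l h1).2 (Set.mem_image_of_mem _ hz)
        calc ⟪l, t0 • z⟫ = t0 * ⟪l, z⟫ := real_inner_smul_right l z t0
          _ ≤ t0 * 1 := mul_le_mul_of_nonneg_left hle1 ht0pos.le
          _ = t0 := mul_one _
          _ = ⟪l, x⟫ := h2.symm
    · rintro ⟨h1, hG⟩
      refine ⟨h1, le_antisymm ?_ ?_⟩
      · obtain ⟨w, hw, heq⟩ := hG.1
        rw [hS, hcxt0] at hw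
        obtain ⟨z, hz, rfl⟩ := hw
        have hle1 : ⟪l, z⟫ ≤ 1 := (hgreat l h1).2 (Set.mem_image_of_mem _ hz)
        calc ⟪l, x⟫ = ⟪l, t0 • z⟫ := heq.symm
          _ = t0 * ⟪l, z⟫ := real_inner_smul_right l z t0
          _ ≤ t0 * 1 := mul_le_mul_of_nonneg_left hle1 ht0pos.le
          _ = t0 := mul_one _
      · obtain ⟨z1, hz1, hz1eq⟩ := (hgreat l h1).1
        simp only at hz1eq
        have hmem1 : t0 • z1 ∈ cx • lipSet K c φ 0 := by
          rw [hS, hcxt0]; exact Set.smul_mem_smul_set hz1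
        have := hG.2 (Set.mem_image_of_mem _ hmem1)
        calc t0 = t0 * ⟪l, z1⟫ := by rw [hz1eq, mul_one]
          _ = ⟪l, t0 • z1⟫ := (real_inner_smul_right l z1 t0).symm
          _ ≤ ⟪l, x⟫ := this
  refine ⟨?_, hiff⟩
  -- Nonemptiness: supporting hyperplane inside W := range φ
  set W := LinearMap.range φ with hWdef
  set φ' : (Fin K → ℝ) →ₗ[ℝ] W := φ.rangeRestrict with hφ'def
  set C' : Set W := ⇑φ' '' V with hC'def
  have hC'conv : Convex ℝ C' := hconv.linear_image φ'
  have hcoe : ∀ f : Fin K → ℝ, ((φ' f : W) : H) = φ f := fun f => rfl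
  have hCC' : C = Subtype.val '' C' := by
    rw [hC'def, ← Set.image_comp]
    rfl
  set x' : W := ⟨x, ⟨f0, hf0⟩⟩ with hx'def
  have hx't0 : x' ∈ t0 • C' := by
    obtain ⟨z, ⟨f, hfV, rfl⟩, hz⟩ := hxt0
    refine ⟨φ' f, ⟨f, hfV, rfl⟩, Subtype.ext ?_⟩
    show ((t0 • φ' f : W) : H) = x
    rw [Submodule.coe_smul, hcoe]
    exact hz
  have habs : ∀ w : W, ∃ s : ℝ, 0 < s ∧ s • w ∈ C' := by
    intro w
    obtain ⟨f, rfl⟩ := φ.surjective_rangeRestrict w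
    rcases (hc0 f).eq_or_lt with h | h
    · exact ⟨1, one_pos, by rw [one_smul]; exact ⟨f, by rw [hV, Set.mem_setOf_eq, ← h]; norm_num, rfl⟩⟩
    · set s : ℝ := ((c f) ^ (1/p))⁻¹ with hs
      have hspos : 0 < s := inv_pos.2 (Real.rpow_pos_of_pos h _)
      refine ⟨s, hspos, ⟨s • f, ?_, by rw [map_smul]⟩⟩
      rw [hV, Set.mem_setOf_eq, hhom s f hspos.le, hs,
        Real.inv_rpow (Real.rpow_nonneg (hc0 f) _), one_div,
        Real.rpow_inv_rpow (hc0 f) hp.ne', inv_mul_cancel₀ h.ne']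
  have h0C' : (0 : W) ∈ C' := ⟨0, h0V, map_zero φ'⟩
  have hspan : affineSpan ℝ C' = ⊤ := by
    rw [← AffineSubspace.coe_eq_univ_iff, ← Set.insert_eq_self.2 h0C',
      affineSpan_insert_zero]
    have : Submodule.span ℝ C' = ⊤ := by
      rw [eq_top_iff]
      intro w _
      obtain ⟨s, hs, hmemw⟩ := habs w
      have : w = s⁻¹ • (s • w) := by rw [smul_smul, inv_mul_cancel₀ hs.ne', one_smul]
      rw [this]
      exact Submodule.smul_mem _ _ (Submodule.subset_span hmemw)
    rw [this, Submodule.top_coe]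
  have hintC' : (interior C').Nonempty :=
    hC'conv.interior_nonempty_iff_affineSpan_eq_top.2 hspan
  have hS'conv : Convex ℝ (t0 • C') := hC'conv.smul t0
  have hintne : (interior (t0 • C')).Nonempty := by
    rw [interior_smul₀ ht0pos.ne']
    exact hintC'.smul_set
  have hxnot : x' ∉ interior (t0 • C') := by
    intro hxint
    have hcont : Filter.Tendsto (fun s : ℝ => s • x') (nhds 1) (nhds x') := by
      have : Continuous fun s : ℝ => s • x' := continuous_id.smul continuous_const
      simpa using this.tendsto 1
    have hpre : (fun s : ℝ => s • x') ⁻¹' interior (t0 • C') ∈ nhds (1:ℝ) :=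
      hcont (isOpen_interior.mem_nhds hxint)
    have hpre' : (fun s : ℝ => s • x') ⁻¹' interior (t0 • C') ∈ nhdsWithin (1:ℝ) (Set.Ioi 1) :=
      nhdsWithin_le_nhds hpre
    obtain ⟨s, hs1, hs2⟩ := Filter.nonempty_of_mem (Filter.inter_mem hpre' self_mem_nhdsWithin)
    obtain ⟨z', hz', hsz⟩ := interior_subset hs1
    have hsgt : (1:ℝ) < s := hs2
    have hxz : x = (t0 / s) • (z' : H) := by
      have hcoez : s • x = t0 • (z' : H) := by
        have := congrArg (Subtype.val : W → H) hsz
        simpa using this.symm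
      rw [div_eq_mul_inv, mul_comm, ← smul_smul, ← hcoez, smul_smul,
        inv_mul_cancel₀ (by linarith : s ≠ 0), one_smul]
    have hTmem : t0 / s ∈ T := by
      refine ⟨div_pos ht0pos (by linarith), ?_⟩
      rw [hxz]
      exact Set.smul_mem_smul_set (hCC' ▸ Set.mem_image_of_mem _ hz')
    have := csInf_le hTbdd hTmem
    have : t0 / s < t0 := div_lt_self ht0pos hsgt
    linarith [csInf_le hTbdd hTmem]
  obtain ⟨g, hg⟩ := geometric_hahn_banach_open_point hS'conv.interior isOpen_interior hxnot
  obtain ⟨w0, hw0⟩ := hintne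
  have hgle : ∀ a ∈ t0 • C', g a ≤ g x' := by
    intro a ha
    have hseq : ∀ n : ℕ, (1 - 1/((n:ℝ)+1)) * g a + (1/((n:ℝ)+1)) * g w0 ≤ g x' := by
      intro n
      have hb : (0:ℝ) < 1/((n:ℝ)+1) := by positivity
      have hb1 : (1:ℝ)/((n:ℝ)+1) ≤ 1 := by
        rw [div_le_one (by positivity)]
        simp [Nat.cast_nonneg]
      have hmemn := hS'conv.combo_self_interior_mem_interior ha hw0
        (by linarith : (0:ℝ) ≤ 1 - 1/((n:ℝ)+1)) hb (by ring)
      have := (hg _ hmemn).le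
      simpa [map_add, map_smul, smul_eq_mul] using this
    have htend : Filter.Tendsto
        (fun n : ℕ => (1 - 1/((n:ℝ)+1)) * g a + (1/((n:ℝ)+1)) * g w0)
        Filter.atTop (nhds (g a)) := by
      have h0 : Filter.Tendsto (fun n : ℕ => 1/((n:ℝ)+1)) Filter.atTop (nhds 0) :=
        tendsto_one_div_add_atTop_nhds_zero_nat
      have h1 : Filter.Tendsto (fun n : ℕ => (1 - 1/((n:ℝ)+1)) * g a)
          Filter.atTop (nhds ((1 - 0) * g a)) := (tendsto_const_nhds.sub h0).mul_const _
      have h2 : Filter.Tendsto (fun n : ℕ => (1/((n:ℝ)+1)) * g w0)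
          Filter.atTop (nhds (0 * g w0)) := h0.mul_const _
      have := h1.add h2
      simpa using this
    exact le_of_tendsto htend (Filter.Eventually.of_forall hseq)
  have hgpos : ∃ v : W, 0 < g v := by
    by_contra hcon
    push_neg at hcon
    have hzero : ∀ v : W, g v = 0 := by
      intro v
      have h1 := hcon v
      have h2 := hcon (-v)
      rw [map_neg] at h2
      linarith
    have := hg w0 hw0
    rw [hzero w0, hzero x'] at this
    exact lt_irrefl _ this
  obtain ⟨v, hv⟩ := hgpos
  obtain ⟨s, hs, hsv⟩ := habs v
  have hM : 0 < g x' := by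
    have hmemv : t0 • (s • v) ∈ t0 • C' := Set.smul_mem_smul_set hsv
    have hle := hgle _ hmemv
    rw [map_smul, map_smul, smul_eq_mul, smul_eq_mul] at hle
    exact lt_of_lt_of_le (by positivity) hle
  set M : ℝ := g x' with hMdef
  set lv : W := (t0 / M) • ((InnerProductSpace.toDual ℝ W).symm g) with hlv
  have hinner : ∀ w : W, ⟪lv, w⟫ = (t0 / M) * g w := by
    intro w
    rw [hlv, real_inner_smul_left, InnerProductSpace.toDual_symm_apply]
  set l : H := (lv : H) with hl
  have hinnerH : ∀ w : W, ⟪l, (w : H)⟫ = (t0 / M) * g w := by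
    intro w
    rw [hl, ← Submodule.coe_inner, hinner]
  have hlC : ∀ z ∈ C, ⟪l, z⟫ ≤ 1 := by
    intro z hz
    rw [hCC'] at hz
    obtain ⟨z', hz', rfl⟩ := hz
    rw [hinnerH]
    have hz't0 : t0 • z' ∈ t0 • C' := Set.smul_mem_smul_set hz'
    have hle := hgle _ hz't0
    rw [map_smul, smul_eq_mul] at hle
    rw [div_mul_eq_mul_div, div_le_one hM]
    linarith
  have hlx : ⟪l, x⟫ = t0 := by
    have : ⟪l, x⟫ = (t0 / M) * g x' := hinnerH x'
    rw [this, ← hMdef, div_mul_cancel₀ _ hM.ne']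
  have hlattain : ∃ z ∈ C, ⟪l, z⟫ = 1 := by
    refine ⟨t0⁻¹ • x, ?_, ?_⟩
    · obtain ⟨z, hz, hzx⟩ := hxt0
      have : t0⁻¹ • x = z := by rw [← hzx, smul_smul, inv_mul_cancel₀ ht0pos.ne', one_smul]
      rw [this]; exact hz
    · rw [real_inner_smul_right, hlx, inv_mul_cancel₀ ht0pos.ne']
  have hdual : lipDual K c φ 0 l = 1 := by
    rw [lipDual, hS]
    apply IsGreatest.csSup_eq
    constructor
    · obtain ⟨z, hz, hzeq⟩ := hlattain
      exact ⟨z, hz, hzeq⟩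
    · rintro y ⟨z, hz, rfl⟩
      exact hlC z hz
  exact ⟨l, (hmem l).2 ⟨hdual, hlx⟩, lv.2⟩
end
end

section
/- Let x be (φ,ε,δ)-feasible with ‖x‖ > ε and suppose Λ_δ(φ,x,ε) ≠ ∅. Then for every λ* ∈ Λ_δ(φ,x,ε) and every h* ∈ ℝ^K such that (β(φ,x,ε,δ))^{1/p}·h* ∈ E(φ,x,ε,δ), one has ⟨λ*, φ(h*)⟩ = max{ ⟨λ*, φ(h)⟩ : h ∈ ℝ^K, c(h) ≤ 1 } = 1 − δ‖λ*‖. -/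
open scoped ENNReal RealInnerProductSpace Pointwise
open Metric Set

noncomputable section

variable {H : Type*} [NormedAddCommGroup H] [InnerProductSpace ℝ H]

/-- If `x` is feasible, `‖x‖ > ε` and `Λ_δ(φ,x,ε) ≠ ∅`, then for every
`λ* ∈ Λ_δ(φ,x,ε)` and every `h*` with `β^(1/p) • h* ∈ E(φ,x,ε,δ)`, one has
`⟨λ*, φ h*⟩ = max {⟨λ*, φ h⟩ : c h ≤ 1} = 1 − δ‖λ*‖`. -/
theorem lambda_hstar_optimality
    [FiniteDimensional ℝ H]
    (K : ℕ) (p : ℝ) (c : (Fin K → ℝ) → ℝ)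
    (φ : (Fin K → ℝ) →ₗ[ℝ] H) (x : H) (ε δ : ℝ)
    (hp : 0 < p) (hc0 : ∀ f, 0 ≤ c f)
    (hhom : ∀ (α : ℝ) (f : Fin K → ℝ), 0 ≤ α → c (α • f) = α ^ p * c f)
    (hconv : Convex ℝ {f | c f ≤ 1}) (hcpt : IsCompact {f | c f ≤ 1})
    (hε : 0 ≤ ε) (hδ : 0 ≤ δ)
    (hfeas : lipVal K p c φ x ε δ ≠ ⊤) (hx : ε < ‖x‖)
    (hne : (lipLambda K p c φ x ε δ).Nonempty) :
    ∀ l ∈ lipLambda K p c φ x ε δ, ∀ hstar : Fin K → ℝ,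
      ((lipVal K p c φ x ε δ).toReal ^ (1 / p)) • hstar ∈ lipEnc K p c φ x ε δ →
      IsGreatest ((fun h => ⟪l, φ h⟫) '' {h | c h ≤ 1}) ⟪l, φ hstar⟫ ∧
      ⟪l, φ hstar⟫ = 1 - δ * ‖l‖ := by
  intro l hl hstar hE
  set β := lipVal K p c φ x ε δ with hβ
  set b : ℝ := β.toReal ^ (1 / p) with hb
  have hb0 : 0 ≤ b := Real.rpow_nonneg ENNReal.toReal_nonneg _
  obtain ⟨𝔠, ⟨hc1, hc2⟩, hcval⟩ := hE
  -- 𝔠 ≥ 0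
  have h𝔠0 : 0 ≤ 𝔠 := le_trans (Real.rpow_nonneg (hc0 _) _) hc1
  -- 𝔠 = b
  have h𝔠p : 𝔠 ^ p = β.toReal := by
    rw [hβ, ← hcval, ENNReal.toReal_ofReal (Real.rpow_nonneg h𝔠0 _)]
  have h𝔠b : 𝔠 = b := by
    rw [hb, ← h𝔠p]
    rw [← Real.rpow_mul h𝔠0, mul_one_div, div_self hp.ne', Real.rpow_one]
  -- b > 0
  have hbpos : 0 < b := by
    rcases lt_or_eq_of_le hb0 with h | h
    · exact h
    · exfalso
      have hf0 : ((b : ℝ) • hstar) = (0 : Fin K → ℝ) := by rw [← h, zero_smul]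
      rw [hf0, map_zero, sub_zero] at hc2
      rw [h𝔠b, ← h] at hc2
      simp only [mul_zero, add_zero] at hc2
      exact absurd hc2 (not_le.mpr hx)
  -- c hstar ≤ 1
  have hcf : c (b • hstar) ≤ b ^ p := by
    have := Real.rpow_le_rpow (Real.rpow_nonneg (hc0 _) _) (hc1.trans_eq h𝔠b) hp.le
    rwa [← Real.rpow_mul (hc0 _), one_div_mul_cancel hp.ne', Real.rpow_one] at this
  have hbp : (0 : ℝ) < b ^ p := Real.rpow_pos_of_pos hbpos _
  have hch : c hstar ≤ 1 := by
    have := hhom b hstar hb0 ▸ hcf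
    rw [hhom b hstar hb0] at hcf
    nlinarith [hbp]
  -- t = b where t = ⟪l,x⟫ - ε‖l‖
  obtain ⟨hdual, hlam⟩ := hl
  have ht : ⟪l, x⟫ - ε * ‖l‖ = b := by
    have h1 : (ENNReal.ofReal (⟪l, x⟫ - ε * ‖l‖)).toReal = (β ^ (1/p)).toReal := by
      rw [hlam]
    rw [ENNReal.toReal_ofReal', ← ENNReal.toReal_rpow] at h1
    rcases le_or_gt (⟪l, x⟫ - ε * ‖l‖) 0 with h | h
    · rw [max_eq_right h] at h1; exact absurd h1.symm (ne_of_gt hbpos)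
    · rwa [max_eq_left h.le] at h1
  -- lower bound: ⟪l, φ (b • hstar)⟫ ≥ b * (1 - δ‖l‖)
  have hlow : b * (1 - δ * ‖l‖) ≤ ⟪l, φ (b • hstar)⟫ := by
    have hip : ⟪l, x - φ (b • hstar)⟫ ≤ ‖l‖ * ‖x - φ (b • hstar)‖ := real_inner_le_norm _ _
    have h2 : ‖l‖ * ‖x - φ (b • hstar)‖ ≤ ‖l‖ * (ε + δ * b) := by
      apply mul_le_mul_of_nonneg_left _ (norm_nonneg l)
      rw [h𝔠b] at hc2; exact hc2
    have h3 : ⟪l, x - φ (b • hstar)⟫ = ⟪l, x⟫ - ⟪l, φ (b • hstar)⟫ := inner_sub_right _ _ _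
    nlinarith [ht]
  have hsmul : ⟪l, φ (b • hstar)⟫ = b * ⟪l, φ hstar⟫ := by
    rw [map_smul]; exact real_inner_smul_right _ _ _
  -- upper bound: ∀ h, c h ≤ 1 → ⟪l, φ h⟫ ≤ 1 - δ‖l‖
  have hub : ∀ h : Fin K → ℝ, c h ≤ 1 → ⟪l, φ h⟫ + δ * ‖l‖ ≤ 1 := by
    intro h hh
    rcases eq_or_ne l 0 with rfl | hl0
    · simp
    -- z := φ h + δ • ‖l‖⁻¹ • l ∈ lipSet, ⟪l,z⟫ = ⟪l,φh⟫ + δ‖l‖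
    have hlnorm : (0 : ℝ) < ‖l‖ := norm_pos_iff.mpr hl0
    have hzmem : φ h + (δ * ‖l‖⁻¹) • l ∈ lipSet K c φ δ := by
      refine ⟨h, hh, ?_⟩
      rw [add_sub_cancel_left, norm_smul]
      rw [Real.norm_eq_abs, abs_of_nonneg (mul_nonneg hδ (inv_nonneg.mpr hlnorm.le))]
      rw [mul_assoc, inv_mul_cancel₀ hlnorm.ne', mul_one]
    have hzval : ⟪l, φ h + (δ * ‖l‖⁻¹) • l⟫ = ⟪l, φ h⟫ + δ * ‖l‖ := by
      rw [inner_add_right, real_inner_smul_right, real_inner_self_eq_norm_sq]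
      field_simp
    -- bddAbove
    obtain ⟨M, hM⟩ : ∃ M, ∀ f : Fin K → ℝ, c f ≤ 1 → ‖φ f‖ ≤ M := by
      have hcont : ContinuousOn (fun f : Fin K → ℝ => ‖φ f‖) {f | c f ≤ 1} :=
        (continuous_norm.comp φ.continuous_of_finiteDimensional).continuousOn
      have hV0 : (0 : Fin K → ℝ) ∈ {f | c f ≤ 1} := by
        have : c (0 : Fin K → ℝ) = 0 := by
          have := hhom 0 0 le_rfl
          rwa [zero_smul, Real.zero_rpow hp.ne', zero_mul] at this
        simp [Set.mem_setOf_eq, this]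
      obtain ⟨f0, _, hf0⟩ := hcpt.exists_isMaxOn ⟨0, hV0⟩ hcont
      exact ⟨‖φ f0‖, fun f hf => hf0 hf⟩
    have hbdd : BddAbove ((fun z => ⟪l, z⟫) '' lipSet K c φ δ) := by
      refine ⟨‖l‖ * (M + δ), ?_⟩
      rintro y ⟨z, ⟨f, hf, hzf⟩, rfl⟩
      calc ⟪l, z⟫ ≤ ‖l‖ * ‖z‖ := real_inner_le_norm _ _
        _ ≤ ‖l‖ * (M + δ) := by
            apply mul_le_mul_of_nonneg_left _ (norm_nonneg l)
            calc ‖z‖ ≤ ‖φ f‖ + ‖z - φ f‖ := by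
                  have := norm_add_le (φ f) (z - φ f); simpa using this
              _ ≤ M + δ := add_le_add (hM f hf) hzf
    have hle : ⟪l, φ h + (δ * ‖l‖⁻¹) • l⟫ ≤ lipDual K c φ δ l :=
      le_csSup hbdd ⟨_, hzmem, rfl⟩
    rw [hzval, hdual] at hle
    exact hle
  -- value at hstar
  have hval : ⟪l, φ hstar⟫ = 1 - δ * ‖l‖ := by
    have h1 : ⟪l, φ hstar⟫ ≤ 1 - δ * ‖l‖ := by linarith [hub hstar hch]
    have h2 : b * (1 - δ * ‖l‖) ≤ b * ⟪l, φ hstar⟫ := by rw [← hsmul]; exact hlow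
    have := le_of_mul_le_mul_left h2 hbpos
    linarith
  refine ⟨⟨⟨hstar, hch, rfl⟩, ?_⟩, hval⟩
  rintro y ⟨h, hh, rfl⟩
  rw [hval]
  linarith [hub h hh]
end
end
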